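/- arXiv:math/0511628 — 8 statements merged into one kernel-verified Lean document; each statement's English description precedes it below -/
import Mathlib

section
/- Let K be a field and n ≥ 2. The localization of the coordinate ring K[SL_n] at the (n−1)-th principal minor Δ_{n-1} is isomorphic to the localization of the polynomial ring K[ξ_{ij} : (i,j) ≠ (n,n)] at Δ_{n-1}; in particular, variables ξ_{nn} can be eliminated using the relation det = 1 once Δ_{n-1} is inverted. -/
open MvPolynomial

/-- The determinant of the generic `n × n` matrix, as an element of
`K[Mat_n] = K[ξ_{ij}]`. -/
noncomputable def genDet (K : Type*) [CommRing K] (n : ℕ) :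
    MvPolynomial (Fin n × Fin n) K :=
  Matrix.det (Matrix.of fun i j : Fin n => X (i, j))

/-- The `k`-th principal minor `Δ_k` of the generic `n × n` matrix. -/
noncomputable def genDelta (K : Type*) [CommRing K] (n : ℕ) (k : ℕ) (hk : k ≤ n) :
    MvPolynomial (Fin n × Fin n) K :=
  Matrix.det (Matrix.of fun i j : Fin k => X (Fin.castLE hk i, Fin.castLE hk j))

/-!
Cofactor expansion along the last row gives `det = Δ_{n-1} ξ_nn + C` with `Δ_{n-1}` and `C` free
of `ξ_nn`. Once `Δ_{n-1}` is inverted, the relation `det = 1` can be solved for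
`ξ_nn = (1 - C) / Δ_{n-1}`, so it simply eliminates that variable: for any polynomials `d`, `b`
not involving `X_q`, inverting `d` in `R[X] / (d X_q - b)` gives `R[X_p : p ≠ q][1/d]`.
-/

open Matrix

namespace MvPolynomial

variable {R σ : Type*} [CommRing R] (q : σ) (d b : MvPolynomial {p // p ≠ q} R)

noncomputable def solveVarIdeal : Ideal (MvPolynomial σ R) :=
  Ideal.span {rename Subtype.val d * X q - rename Subtype.val b}

noncomputable def awayToAwayQuotient :
    Localization.Away d →ₐ[R]
      Localization.Away (Ideal.Quotient.mk (solveVarIdeal q d b) (rename Subtype.val d)) :=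
  IsLocalization.Away.liftAlgHom d
    (f := (Algebra.algHom R _ _).comp
      ((Ideal.Quotient.mkₐ R (solveVarIdeal q d b)).comp (rename Subtype.val))) <| by
      simp only [AlgHom.comp_apply, Ideal.Quotient.mkₐ_eq_mk]
      exact IsLocalization.Away.algebraMap_isUnit _

variable {q d b}

theorem awayToAwayQuotient_algebraMap (x : MvPolynomial {p // p ≠ q} R) :
    awayToAwayQuotient q d b (algebraMap _ _ x) =
      algebraMap _ _ (Ideal.Quotient.mk (solveVarIdeal q d b) (rename Subtype.val x)) := by
  rw [awayToAwayQuotient, IsLocalization.Away.liftAlgHom_apply, IsLocalization.Away.lift_eq]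
  rfl

variable [DecidableEq σ]

variable (q d b) in
noncomputable def solveVar : MvPolynomial σ R →ₐ[R] Localization.Away d :=
  aeval fun p =>
    if h : p = q then algebraMap _ (Localization.Away d) b * IsLocalization.Away.invSelf d
    else algebraMap _ _ (X ⟨p, h⟩ : MvPolynomial {p // p ≠ q} R)

theorem solveVar_rename (x : MvPolynomial {p // p ≠ q} R) :
    solveVar q d b (rename Subtype.val x) = algebraMap _ _ x := by
  suffices (solveVar q d b).comp (rename Subtype.val) = IsScalarTower.toAlgHom R _ _ from
    AlgHom.congr_fun this x
  ext ⟨p, hp⟩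
  simp [solveVar, hp]

theorem solveVar_X_self :
    solveVar q d b (X q) =
      algebraMap _ (Localization.Away d) b * IsLocalization.Away.invSelf d := by
  simp [solveVar]

theorem solveVar_eq_zero_of_mem_solveVarIdeal {x : MvPolynomial σ R}
    (hx : x ∈ solveVarIdeal q d b) :
    solveVar q d b x = 0 := by
  obtain ⟨y, rfl⟩ := Ideal.mem_span_singleton'.mp hx
  rw [map_mul, map_sub, map_mul, solveVar_rename, solveVar_rename, solveVar_X_self]
  linear_combination (solveVar q d b y * algebraMap _ (Localization.Away d) b) *
    IsLocalization.Away.mul_invSelf (S := Localization.Away d) d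

theorem awayToAwayQuotient_solveVar (x : MvPolynomial σ R) :
    awayToAwayQuotient q d b (solveVar q d b x) =
      algebraMap _ _ (Ideal.Quotient.mk (solveVarIdeal q d b) x) := by
  suffices (awayToAwayQuotient q d b).comp (solveVar q d b) =
      (Algebra.algHom R _ _).comp (Ideal.Quotient.mkₐ R (solveVarIdeal q d b)) from
    AlgHom.congr_fun this x
  ext p
  change awayToAwayQuotient q d b (solveVar q d b (X p)) =
    algebraMap _ _ (Ideal.Quotient.mk (solveVarIdeal q d b) (X p))
  by_cases hp : p = q
  · subst hp
    set ι := algebraMap (MvPolynomial σ R ⧸ solveVarIdeal p d b)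
      (Localization.Away (Ideal.Quotient.mk (solveVarIdeal p d b) (rename Subtype.val d)))
    set v := awayToAwayQuotient p d b (IsLocalization.Away.invSelf d)
    have hv : ι (Ideal.Quotient.mk _ (rename Subtype.val d)) * v = 1 := by
      rw [← awayToAwayQuotient_algebraMap, ← map_mul, IsLocalization.Away.mul_invSelf, map_one]
    have hX : ι (Ideal.Quotient.mk _ (rename Subtype.val d)) * ι (Ideal.Quotient.mk _ (X p)) =
        ι (Ideal.Quotient.mk _ (rename Subtype.val b)) := by
      rw [← map_mul, ← map_mul]
      exact congrArg ι (Ideal.Quotient.eq.mpr (Ideal.subset_span rfl))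
    rw [solveVar_X_self, map_mul, awayToAwayQuotient_algebraMap, ← hX]
    linear_combination ι (Ideal.Quotient.mk _ (X p)) * hv
  · simp [solveVar, hp, awayToAwayQuotient_algebraMap]

variable (q d b) in
noncomputable def awayQuotientToAway :
    Localization.Away (Ideal.Quotient.mk (solveVarIdeal q d b) (rename Subtype.val d)) →ₐ[R]
      Localization.Away d :=
  IsLocalization.Away.liftAlgHom (Ideal.Quotient.mk _ (rename Subtype.val d))
    (f := Ideal.Quotient.liftₐ _ (solveVar q d b) fun _ => solveVar_eq_zero_of_mem_solveVarIdeal)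
    <| by
      change IsUnit (solveVar q d b (rename Subtype.val d))
      rw [solveVar_rename]
      exact IsLocalization.Away.algebraMap_isUnit d

theorem awayQuotientToAway_algebraMap_mk (x : MvPolynomial σ R) :
    awayQuotientToAway q d b (algebraMap _ _ (Ideal.Quotient.mk (solveVarIdeal q d b) x)) =
      solveVar q d b x := by
  rw [awayQuotientToAway, IsLocalization.Away.liftAlgHom_apply, IsLocalization.Away.lift_eq]
  rfl

variable (q d b)

theorem awayQuotientToAway_comp_awayToAwayQuotient :
    (awayQuotientToAway q d b).comp (awayToAwayQuotient q d b) =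
      AlgHom.id R (Localization.Away d) := by
  apply IsLocalization.algHom_ext (Submonoid.powers d)
  ext p
  change awayQuotientToAway q d b (awayToAwayQuotient q d b (algebraMap _ _ (X p))) =
    algebraMap _ _ (X p)
  rw [awayToAwayQuotient_algebraMap, awayQuotientToAway_algebraMap_mk, solveVar_rename]

theorem awayToAwayQuotient_comp_awayQuotientToAway :
    (awayToAwayQuotient q d b).comp (awayQuotientToAway q d b) =
      AlgHom.id R
        (Localization.Away (Ideal.Quotient.mk (solveVarIdeal q d b) (rename Subtype.val d))) := by
  apply IsLocalization.algHom_ext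
    (Submonoid.powers (Ideal.Quotient.mk (solveVarIdeal q d b) (rename Subtype.val d)))
  apply Ideal.Quotient.algHom_ext
  ext x
  change awayToAwayQuotient q d b (awayQuotientToAway q d b
    (algebraMap _ _ (Ideal.Quotient.mk (solveVarIdeal q d b) (X x)))) =
      algebraMap _
        (Localization.Away (Ideal.Quotient.mk (solveVarIdeal q d b) (rename Subtype.val d)))
        (Ideal.Quotient.mk (solveVarIdeal q d b) (X x))
  rw [awayQuotientToAway_algebraMap_mk, awayToAwayQuotient_solveVar]

noncomputable def awayQuotientEquivAway :
    Localization.Away (Ideal.Quotient.mk (solveVarIdeal q d b) (rename Subtype.val d)) ≃ₐ[R]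
      Localization.Away d :=
  AlgEquiv.ofAlgHom _ _ (awayQuotientToAway_comp_awayToAwayQuotient q d b)
    (awayToAwayQuotient_comp_awayQuotientToAway q d b)

end MvPolynomial

theorem Matrix.det_eq_det_submatrix_castSucc_mul_add {R : Type*} [CommRing R] {m : ℕ}
    (M : Matrix (Fin (m + 1)) (Fin (m + 1)) R) :
    M.det = (M.submatrix Fin.castSucc Fin.castSucc).det * M (Fin.last m) (Fin.last m) +
      (M.updateRow (Fin.last m) (Function.update (M (Fin.last m)) (Fin.last m) 0)).det := by
  set l := Fin.last m
  have hrow : M l = Function.update (M l) l 0 + M l l • Pi.single l 1 := by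
    ext j
    by_cases hj : j = l <;> simp [hj]
  conv_lhs => rw [← updateRow_eq_self M l, hrow]
  rw [det_updateRow_add, det_updateRow_smul, ← adjugate_apply, adjugate_fin_succ_eq_det_submatrix,
    Fin.succAbove_last, Even.neg_one_pow ⟨_, rfl⟩, one_mul]
  ring

section GenericMatrix

variable (K : Type*) [CommRing K] (m : ℕ)

abbrev lastEntry : Fin (m + 1) × Fin (m + 1) := (Fin.last m, Fin.last m)

noncomputable def leadingMinor : MvPolynomial {p // p ≠ lastEntry m} K :=
  det (of fun i j : Fin m =>
    X ⟨(i.castSucc, j.castSucc), ne_of_apply_ne Prod.fst (Fin.castSucc_lt_last i).ne⟩)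

noncomputable def detLastEntryZero : MvPolynomial {p // p ≠ lastEntry m} K :=
  det (of fun i j => if h : (i, j) = lastEntry m then 0 else X ⟨(i, j), h⟩)

theorem rename_leadingMinor :
    rename Subtype.val (leadingMinor K m) = genDelta K (m + 1) m m.le_succ := by
  rw [leadingMinor, genDelta, AlgHom.map_det]
  congr 1
  ext i j : 1
  simp only [AlgHom.mapMatrix_apply, map_apply, of_apply, rename_X]
  rfl

theorem genDet_eq :
    genDet K (m + 1) = rename Subtype.val (leadingMinor K m) * X (lastEntry m) +
      rename Subtype.val (detLastEntryZero K m) := by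
  rw [genDet, det_eq_det_submatrix_castSucc_mul_add, leadingMinor, detLastEntryZero,
    AlgHom.map_det, AlgHom.map_det]
  congr 3
  · ext i j : 1
    simp
  · ext i j : 1
    by_cases hi : i = Fin.last m <;> by_cases hj : j = Fin.last m <;> simp [updateRow_apply, hi, hj]

theorem genDet_sub_one_eq :
    genDet K (m + 1) - 1 = rename Subtype.val (leadingMinor K m) * X (lastEntry m) -
      rename Subtype.val (1 - detLastEntryZero K m) := by
  rw [genDet_eq, map_sub, map_one]
  ring

end GenericMatrix

/-- for a field `K` and `n ≥ 2`, the localization of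
`K[SL_n] = K[Mat_n]/(det - 1)` at (the image of) the principal minor `Δ_{n-1}`
is isomorphic, as a `K`-algebra, to the localization of the polynomial ring in the
variables `ξ_{ij}`, `(i,j) ≠ (n,n)`, at `Δ_{n-1}`. -/
theorem stmt0 (K : Type*) [Field K] (n : ℕ) (hn : 2 ≤ n) :
    Nonempty (
      Localization.Away
        (Ideal.Quotient.mk (Ideal.span {genDet K n - 1})
          (genDelta K n (n - 1) (by omega)))
      ≃ₐ[K]
      Localization.Away
        (Matrix.det (Matrix.of fun i j : Fin (n - 1) =>
          (X (⟨(Fin.castLE (by omega) i, Fin.castLE (by omega) j), by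
                intro h
                have hi := i.2
                simp [Prod.ext_iff, Fin.ext_iff] at h
                omega⟩) :
            MvPolynomial
              {p : Fin n × Fin n // p ≠ (⟨n - 1, by omega⟩, ⟨n - 1, by omega⟩)} K)))) := by
  obtain ⟨m, rfl⟩ : ∃ m, n = m + 1 := ⟨n - 1, by omega⟩
  have e := awayQuotientEquivAway (lastEntry m) (leadingMinor K m) (1 - detLastEntryZero K m)
  rw [solveVarIdeal, ← genDet_sub_one_eq, rename_leadingMinor] at e
  exact ⟨e⟩
end

section
/- Let A be an associative unital algebra over a field F and L a field extension of F. If for every finite field extension F' of F the algebra F' ⊗_F A has no zero divisors, then L ⊗_F A has no zero divisors. -/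
/-!
`L ⊗[F] A` is the directed union of the subrings `R ⊗[F] A`, `R` running over the finitely
generated subalgebras of `L` (the maps `R ⊗[F] A → L ⊗[F] A` are injective because everything is
flat over a field), so it suffices to treat a finitely generated `F`-domain `R`. Suppose `x y = 0`
in `R ⊗[F] A` with `x, y ≠ 0`, and let `r`, `s` be nonzero coordinates of `x`, `y` in an `F`-basis
of `A`. By the weak Nullstellensatz some `F`-algebra map `ψ` from `R` to a finite extension of `F`
does not kill `r s`; then `ψ ⊗ id` maps `x` and `y` to nonzero elements with product zero.
-/

open TensorProduct

section Coordinates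

variable {R M N P : Type*} [CommSemiring R] [AddCommMonoid M] [Module R M]
  [AddCommMonoid N] [Module R N] [AddCommMonoid P] [Module R P]
  {ι : Type*} [DecidableEq ι] (𝒞 : Module.Basis ι R N)

theorem TensorProduct.equivFinsuppOfBasisRight_rTensor (f : M →ₗ[R] P) (z : M ⊗[R] N) (i : ι) :
    equivFinsuppOfBasisRight 𝒞 (f.rTensor N z) i = f (equivFinsuppOfBasisRight 𝒞 z i) := by
  induction z using TensorProduct.induction_on with
  | zero => simp
  | tmul m n => simp
  | add z z' hz hz' => simp [hz, hz']

theorem TensorProduct.rTensor_ne_zero_of_equivFinsuppOfBasisRight {f : M →ₗ[R] P}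
    {z : M ⊗[R] N} {i : ι} (h : f (equivFinsuppOfBasisRight 𝒞 z i) ≠ 0) :
    f.rTensor N z ≠ 0 := fun hz ↦ h <| by
  rw [← equivFinsuppOfBasisRight_rTensor, hz, map_zero, Finsupp.zero_apply]

end Coordinates

theorem Subalgebra.range_rTensor_val_mono {R S N : Type*} [CommSemiring R] [Semiring S]
    [Algebra R S] [AddCommMonoid N] [Module R N] {B B' : Subalgebra R S} (hBB' : B ≤ B') :
    LinearMap.range (LinearMap.rTensor N B.val.toLinearMap) ≤
      LinearMap.range (LinearMap.rTensor N B'.val.toLinearMap) := by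
  have : B.val = B'.val.comp (Subalgebra.inclusion hBB') := rfl
  rw [this, AlgHom.comp_toLinearMap, LinearMap.rTensor_comp]
  exact LinearMap.range_comp_le_range _ _

theorem Ideal.exists_isMaximal_notMem_of_not_isNilpotent {R : Type*} [CommRing R]
    [IsJacobsonRing R] {t : R} (ht : ¬IsNilpotent t) : ∃ m : Ideal R, m.IsMaximal ∧ t ∉ m := by
  have : t ∉ (⊥ : Ideal R).jacobson := by
    rw [← Ideal.radical_eq_jacobson]
    exact mem_nilradical.not.mpr ht
  simpa [Ideal.jacobson, Submodule.mem_sInf] using this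

section FiniteExtensions

variable {F : Type*} [Field F]

theorem exists_finiteDimensional_intermediateField_algHom_injective (S : Type*) [Field S]
    [Algebra F S] [Algebra.FiniteType F S] :
    ∃ K : IntermediateField F (AlgebraicClosure F), FiniteDimensional F K ∧
      ∃ ψ : S →ₐ[F] K, Function.Injective ψ := by
  have : Module.Finite F S := finite_of_finite_type_of_isJacobsonRing F S
  have : Algebra.IsAlgebraic F S := Algebra.IsAlgebraic.of_finite F S
  let φ : S →ₐ[F] AlgebraicClosure F := IsAlgClosed.lift
  let e : S ≃ₐ[F] φ.fieldRange := AlgEquiv.ofInjectiveField φ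
  exact ⟨φ.fieldRange, Module.Finite.equiv e.toLinearEquiv, e.toAlgHom, e.injective⟩

theorem exists_finiteDimensional_intermediateField_algHom_ne_zero {R : Type*} [CommRing R]
    [Algebra F R] [Algebra.FiniteType F R] {t : R} (ht : ¬IsNilpotent t) :
    ∃ K : IntermediateField F (AlgebraicClosure F), FiniteDimensional F K ∧
      ∃ ψ : R →ₐ[F] K, ψ t ≠ 0 := by
  have : IsJacobsonRing R := isJacobsonRing_of_finiteType (A := F)
  obtain ⟨m, hm, htm⟩ := Ideal.exists_isMaximal_notMem_of_not_isNilpotent ht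
  let : Field (R ⧸ m) := Ideal.Quotient.field m
  have : Algebra.FiniteType F (R ⧸ m) :=
    .of_surjective (Ideal.Quotient.mkₐ F m) Ideal.Quotient.mk_surjective
  obtain ⟨K, hK, ψ, hψ⟩ :=
    exists_finiteDimensional_intermediateField_algHom_injective (F := F) (R ⧸ m)
  refine ⟨K, hK, ψ.comp (Ideal.Quotient.mkₐ F m), fun h0 ↦ htm ?_⟩
  rw [← Ideal.Quotient.eq_zero_iff_mem]
  exact hψ (h0.trans (map_zero ψ).symm)

end FiniteExtensions

section NoZeroDivisors

variable {F : Type*} [Field F] {A : Type*} [Ring A] [Algebra F A]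

theorem noZeroDivisors_tensor_of_finiteType
    (h : ∀ K : IntermediateField F (AlgebraicClosure F), FiniteDimensional F K →
      NoZeroDivisors (K ⊗[F] A))
    (R : Type*) [CommRing R] [NoZeroDivisors R] [Algebra F R] [Algebra.FiniteType F R] :
    NoZeroDivisors (R ⊗[F] A) := by
  classical
  refine ⟨fun {x y} hxy ↦ ?_⟩
  by_contra! hxy0
  let 𝒞 := Module.Free.chooseBasis F A
  obtain ⟨i, hi⟩ := Finsupp.ne_iff.mp ((equivFinsuppOfBasisRight 𝒞).map_ne_zero_iff.mpr hxy0.1)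
  obtain ⟨j, hj⟩ := Finsupp.ne_iff.mp ((equivFinsuppOfBasisRight 𝒞).map_ne_zero_iff.mpr hxy0.2)
  set r := equivFinsuppOfBasisRight 𝒞 x i
  set s := equivFinsuppOfBasisRight 𝒞 y j
  have hrs : ¬IsNilpotent (r * s) := fun ⟨n, hn⟩ ↦ pow_ne_zero n (mul_ne_zero hi hj) hn
  obtain ⟨K, hK, ψ, hψ⟩ := exists_finiteDimensional_intermediateField_algHom_ne_zero (F := F) hrs
  have := h K hK
  have hψr : ψ r ≠ 0 := left_ne_zero_of_mul (map_mul ψ r s ▸ hψ)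
  have hψs : ψ s ≠ 0 := right_ne_zero_of_mul (map_mul ψ r s ▸ hψ)
  have hx : Algebra.TensorProduct.rTensor A ψ x ≠ 0 :=
    rTensor_ne_zero_of_equivFinsuppOfBasisRight (f := ψ.toLinearMap) 𝒞 hψr
  have hy : Algebra.TensorProduct.rTensor A ψ y ≠ 0 :=
    rTensor_ne_zero_of_equivFinsuppOfBasisRight (f := ψ.toLinearMap) 𝒞 hψs
  exact mul_ne_zero hx hy (by rw [← map_mul, hxy, map_zero])

theorem noZeroDivisors_tensor_of_fg {S : Type*} [Ring S] [Algebra F S]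
    (h : ∀ R : Subalgebra F S, R.FG → NoZeroDivisors (R ⊗[F] A)) :
    NoZeroDivisors (S ⊗[F] A) := by
  refine ⟨fun {x y} hxy ↦ ?_⟩
  obtain ⟨R₁, hR₁, hx⟩ := TensorProduct.Algebra.exists_of_fg (N := A) x
  obtain ⟨R₂, hR₂, hy⟩ := TensorProduct.Algebra.exists_of_fg (N := A) y
  obtain ⟨x', rfl⟩ := Subalgebra.range_rTensor_val_mono (le_sup_left : R₁ ≤ R₁ ⊔ R₂) hx
  obtain ⟨y', rfl⟩ := Subalgebra.range_rTensor_val_mono (le_sup_right : R₂ ≤ R₁ ⊔ R₂) hy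
  have := h _ (hR₁.sup hR₂)
  let f := Algebra.TensorProduct.rTensor (R := F) A (R₁ ⊔ R₂).val
  have hf : Function.Injective f :=
    Module.Flat.rTensor_preserves_injective_linearMap _ Subtype.val_injective
  change f x' = 0 ∨ f y' = 0
  have hxy' : f (x' * y') = f 0 := by rw [map_mul, map_zero]; exact hxy
  rcases mul_eq_zero.mp (hf hxy') with h0 | h0 <;> simp [h0]

end NoZeroDivisors

/-- let `A` be an associative unital algebra over a field `F` and `L` a field
extension of `F`. If for every finite field extension `F'` of `F` the algebra `F' ⊗[F] A`
has no zero divisors, then `L ⊗[F] A` has no zero divisors. -/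
theorem stmt5 (F : Type u) [Field F] (A : Type v) [Ring A] [Algebra F A]
    (L : Type w) [Field L] [Algebra F L]
    (h : ∀ (F' : Type u) [Field F'] [Algebra F F'], FiniteDimensional F F' →
      NoZeroDivisors (F' ⊗[F] A)) :
    NoZeroDivisors (L ⊗[F] A) :=
  noZeroDivisors_tensor_of_fg fun R hR ↦
    have := (Subalgebra.fg_iff_finiteType R).mp hR
    noZeroDivisors_tensor_of_finiteType (fun K hK ↦ h K hK) R
end

section
/- Let R be the valuation ring of a nontrivial discrete valuation of a field F with residue field K. Let A be an associative unital R-algebra which is free as an R-module, and let L be a field extension of F. If for every finite extension K' of K the algebra K' ⊗_R A has no zero divisors, then L ⊗_R A has no zero divisors. -/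
/-!
Suppose `x * y = 0` in `L ⊗[R] A` with `x, y ≠ 0`, and fix an `R`-basis of `A`. Choose a valuation
subring `O` of `L` dominating the local ring `R`. Dividing `x` and `y` by their coordinates of
largest valuation puts all coordinates in `O`, one of them equal to `1`, so the relation descends
to `O ⊗[R] A` and then reduces to the residue field `k` of `O` without either factor becoming `0`.
The coordinates generate a finitely generated subalgebra of `k` over the residue field `κ` of `R`;
the relation descends to it and then maps to a quotient by a maximal ideal, which is finite over `κ`
by the Nullstellensatz.
-/

open scoped TensorProduct

universe u u' v w

theorem Algebra.TensorProduct.map_id_injective {R A S T : Type*} [CommRing R] [Ring A]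
    [Algebra R A] [Module.Flat R A] [CommRing S] [CommRing T] [Algebra R S] [Algebra R T]
    {g : S →ₐ[R] T} (hg : Function.Injective g) :
    Function.Injective (Algebra.TensorProduct.map g (AlgHom.id R A)) :=
  Module.Flat.rTensor_preserves_injective_linearMap g.toLinearMap hg

namespace Module.Basis

variable {R : Type*} [CommRing R] {A : Type*} [Ring A] [Algebra R A] {ι : Type*}
  (b : Basis ι R A) {S T : Type*} [CommRing S] [CommRing T] [Algebra R S] [Algebra R T]

theorem baseChange_repr_map (g : S →ₐ[R] T) (z : S ⊗[R] A) (i : ι) :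
    (b.baseChange T).repr (Algebra.TensorProduct.map g (AlgHom.id R A) z) i =
      g ((b.baseChange S).repr z i) := by
  induction z using TensorProduct.induction_on with
  | zero => simp
  | tmul s a => simp [baseChange_repr_tmul]
  | add z z' hz hz' => simp [hz, hz']

theorem exists_map_eq_of_repr_mem_range (g : S →ₐ[R] T) {z : T ⊗[R] A}
    (h : ∀ i, (b.baseChange T).repr z i ∈ Set.range g) :
    ∃ z' : S ⊗[R] A, Algebra.TensorProduct.map g (AlgHom.id R A) z' = z := by
  choose s hs using h
  refine ⟨∑ i ∈ ((b.baseChange T).repr z).support, s i ⊗ₜ b i, ?_⟩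
  conv_rhs => rw [← (b.baseChange T).linearCombination_repr z]
  simp [Finsupp.linearCombination_apply, Finsupp.sum, hs, TensorProduct.smul_tmul']

def HasCoordOne (z : S ⊗[R] A) : Prop :=
  ∃ i, (b.baseChange S).repr z i = 1

variable (S) in
/-- Unlike `x * y = 0` with `x, y ≠ 0`, this is preserved by every map to a nontrivial ring. -/
def HasNormalizedZeroDivisors : Prop :=
  ∃ x y : S ⊗[R] A, b.HasCoordOne x ∧ b.HasCoordOne y ∧ x * y = 0

variable {b}

theorem HasCoordOne.map (g : S →ₐ[R] T) {z : S ⊗[R] A} (hz : b.HasCoordOne z) :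
    b.HasCoordOne (Algebra.TensorProduct.map g (AlgHom.id R A) z) :=
  let ⟨i, hi⟩ := hz
  ⟨i, by rw [baseChange_repr_map, hi, map_one]⟩

theorem HasCoordOne.of_map {g : S →ₐ[R] T} (hg : Function.Injective g) {z : S ⊗[R] A}
    (hz : b.HasCoordOne (Algebra.TensorProduct.map g (AlgHom.id R A) z)) : b.HasCoordOne z :=
  let ⟨i, hi⟩ := hz
  ⟨i, hg <| by rw [← baseChange_repr_map, hi, map_one]⟩

theorem HasCoordOne.ne_zero [Nontrivial S] {z : S ⊗[R] A} (hz : b.HasCoordOne z) : z ≠ 0 := by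
  rintro rfl
  obtain ⟨i, hi⟩ := hz
  simp at hi

theorem HasNormalizedZeroDivisors.map (g : S →ₐ[R] T) (h : b.HasNormalizedZeroDivisors S) :
    b.HasNormalizedZeroDivisors T :=
  let ⟨x, y, hx, hy, hxy⟩ := h
  ⟨_, _, hx.map g, hy.map g, by rw [← map_mul, hxy, map_zero]⟩

theorem HasNormalizedZeroDivisors.not_noZeroDivisors [Nontrivial S]
    (h : b.HasNormalizedZeroDivisors S) : ¬ NoZeroDivisors (S ⊗[R] A) := by
  intro _
  obtain ⟨x, y, hx, hy, hxy⟩ := h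
  exact (mul_ne_zero hx.ne_zero hy.ne_zero) hxy

theorem HasNormalizedZeroDivisors.of_map {g : S →ₐ[R] T} (hg : Function.Injective g)
    {x y : T ⊗[R] A} (hx : b.HasCoordOne x) (hy : b.HasCoordOne y) (hxy : x * y = 0)
    (hxg : ∀ i, (b.baseChange T).repr x i ∈ Set.range g)
    (hyg : ∀ i, (b.baseChange T).repr y i ∈ Set.range g) :
    b.HasNormalizedZeroDivisors S := by
  have : Module.Free R A := .of_basis b
  obtain ⟨x', rfl⟩ := b.exists_map_eq_of_repr_mem_range g hxg
  obtain ⟨y', rfl⟩ := b.exists_map_eq_of_repr_mem_range g hyg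
  refine ⟨x', y', hx.of_map hg, hy.of_map hg, Algebra.TensorProduct.map_id_injective hg ?_⟩
  rw [map_mul, hxy, map_zero]

theorem exists_hasCoordOne_smul_of_valuationSubring {K : Type*} [Field K] [Algebra R K]
    (O : ValuationSubring K) {z : K ⊗[R] A} (hz : z ≠ 0) :
    ∃ c : K, b.HasCoordOne (c • z) ∧ ∀ i, (b.baseChange K).repr (c • z) i ∈ O := by
  set v := (b.baseChange K).repr z
  obtain ⟨i₀, hi₀, hmax⟩ := v.support.exists_max_image (O.valuation ∘ v)
    (Finsupp.support_nonempty_iff.2 (by simpa [v] using hz))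
  have hv : v i₀ ≠ 0 := Finsupp.mem_support_iff.1 hi₀
  refine ⟨(v i₀)⁻¹, ⟨i₀, by simp [v, hv]⟩, fun i => ?_⟩
  rw [map_smul, Finsupp.smul_apply, smul_eq_mul, ← O.valuation_le_one_iff, map_mul, map_inv₀,
    inv_mul_le_one₀ (O.valuation.pos_iff.2 hv)]
  by_cases hi : i ∈ v.support
  · exact hmax i hi
  · rw [Finsupp.notMem_support_iff.1 hi, map_zero]
    exact zero_le

theorem exists_hasCoordOne_smul {K : Type*} [Field K] [Algebra R K] {z : K ⊗[R] A}
    (hz : z ≠ 0) : ∃ c : K, b.HasCoordOne (c • z) :=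
  (b.exists_hasCoordOne_smul_of_valuationSubring ⊤ hz).imp fun _ => And.left

theorem hasNormalizedZeroDivisors_of_valuationSubring {L : Type*} [Field L] [Algebra R L]
    (O : ValuationSubring L) [Algebra R O] [IsScalarTower R O L] {x y : L ⊗[R] A}
    (hx : x ≠ 0) (hy : y ≠ 0) (hxy : x * y = 0) : b.HasNormalizedZeroDivisors O := by
  obtain ⟨c, hc, hcO⟩ := b.exists_hasCoordOne_smul_of_valuationSubring O hx
  obtain ⟨d, hd, hdO⟩ := b.exists_hasCoordOne_smul_of_valuationSubring O hy
  exact .of_map (g := IsScalarTower.toAlgHom R O L) Subtype.val_injective hc hd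
    (by rw [smul_mul_smul_comm, hxy, smul_zero]) (fun i => ⟨⟨_, hcO i⟩, rfl⟩)
    (fun i => ⟨⟨_, hdO i⟩, rfl⟩)

end Module.Basis

/-- `K'` is a quotient of a polynomial ring over `κ` rather than of `B`, so that it lives in the
universe of `κ`. -/
theorem exists_algHom_finiteDimensional (κ : Type u) [Field κ] (B : Type*) [CommRing B]
    [Nontrivial B] [Algebra κ B] [Algebra.FiniteType κ B] :
    ∃ (K' : Type u) (_ : Field K') (_ : Algebra κ K'),
      FiniteDimensional κ K' ∧ Nonempty (B →ₐ[κ] K') := by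
  obtain ⟨n, f, hf⟩ := Algebra.FiniteType.iff_quotient_mvPolynomial''.mp ‹_›
  obtain ⟨m, hm, hker⟩ := Ideal.exists_le_maximal (RingHom.ker f) (RingHom.ker_ne_top f)
  let := Ideal.Quotient.field m
  have : Algebra.FiniteType κ (MvPolynomial (Fin n) κ ⧸ m) :=
    .of_surjective (Ideal.Quotient.mkₐ κ m) (Ideal.Quotient.mkₐ_surjective κ m)
  exact ⟨_, _, _, finite_of_finite_type_of_isJacobsonRing κ _,
    ⟨(Ideal.Quotient.factorₐ κ hker).comp (Ideal.quotientKerAlgEquivOfSurjective hf).symm⟩⟩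

theorem noZeroDivisors_of_forall_finiteDimensional {R : Type*} [CommRing R] {A : Type*} [Ring A]
    [Algebra R A] [Module.Free R A] (κ : Type u) [Field κ] [Algebra R κ] (k : Type*) [Field k]
    [Algebra R k] [Algebra κ k] [IsScalarTower R κ k]
    (h : ∀ (K' : Type u) [Field K'] [Algebra R K'] [Algebra κ K'] [IsScalarTower R κ K'],
      FiniteDimensional κ K' → NoZeroDivisors (K' ⊗[R] A)) :
    NoZeroDivisors (k ⊗[R] A) := by
  refine ⟨fun {x y} hxy => ?_⟩
  by_contra! hne
  let b := Module.Free.chooseBasis R A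
  obtain ⟨c, hc⟩ := b.exists_hasCoordOne_smul hne.1
  obtain ⟨d, hd⟩ := b.exists_hasCoordOne_smul hne.2
  let B := Algebra.adjoin κ
    (Set.range ((b.baseChange k).repr (c • x)) ∪ Set.range ((b.baseChange k).repr (d • y)))
  have hB : b.HasNormalizedZeroDivisors B :=
    .of_map (g := B.val.restrictScalars R) Subtype.val_injective hc hd
      (by rw [smul_mul_smul_comm, hxy, smul_zero])
      (fun i => ⟨⟨_, Algebra.subset_adjoin (.inl ⟨i, rfl⟩)⟩, rfl⟩)
      (fun i => ⟨⟨_, Algebra.subset_adjoin (.inr ⟨i, rfl⟩)⟩, rfl⟩)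
  have : Algebra.FiniteType κ B :=
    .adjoin_of_finite ((Finsupp.finite_range _).union (Finsupp.finite_range _))
  obtain ⟨K', _, _, hfin, ⟨φ⟩⟩ := exists_algHom_finiteDimensional κ B
  let : Algebra R K' := ((algebraMap κ K').comp (algebraMap R κ)).toAlgebra
  have : IsScalarTower R κ K' := .of_algebraMap_eq' rfl
  exact (hB.map (φ.restrictScalars R)).not_noZeroDivisors (h K' hfin)

theorem stmt6_general (R : Type u) [CommRing R] [IsDomain R] [IsDiscreteValuationRing R]
    (A : Type w) [Ring A] [Algebra R A] [Module.Free R A]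
    (L : Type w) [Field L] [Algebra R L]
    (h : ∀ (K' : Type u) [Field K'] [Algebra R K']
        [Algebra (IsLocalRing.ResidueField R) K']
        [IsScalarTower R (IsLocalRing.ResidueField R) K'],
      FiniteDimensional (IsLocalRing.ResidueField R) K' →
        NoZeroDivisors (K' ⊗[R] A)) :
    NoZeroDivisors (L ⊗[R] A) := by
  refine ⟨fun {x y} hxy => ?_⟩
  by_contra! hne
  let b := Module.Free.chooseBasis R A
  obtain ⟨O, hRO, hloc⟩ := IsLocalRing.exists_factor_valuationRing (algebraMap R L)
  let : Algebra R O := ((algebraMap R L).codRestrict O.toSubring hRO).toAlgebra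
  have : IsScalarTower R O L := .of_algebraMap_eq' rfl
  have : IsLocalHom (algebraMap R O) := hloc
  have hO := b.hasNormalizedZeroDivisors_of_valuationSubring O hne.1 hne.2 hxy
  exact (hO.map (IsScalarTower.toAlgHom R O (IsLocalRing.ResidueField O))).not_noZeroDivisors
    (noZeroDivisors_of_forall_finiteDimensional _ _ h)

/-- let `R` be the valuation ring of a nontrivial discrete valuation of a
field `F` (i.e. a discrete valuation ring with fraction field `F`) with residue field `K`.
Let `A` be an associative unital `R`-algebra which is free as an `R`-module, and `L` a
field extension of `F`. If for every finite extension `K'` of the residue field `K` the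
algebra `K' ⊗[R] A` has no zero divisors, then `L ⊗[R] A` has no zero divisors. -/
theorem stmt6 (R : Type u) [CommRing R] [IsDomain R] [IsDiscreteValuationRing R]
    (F : Type v) [Field F] [Algebra R F] [IsFractionRing R F]
    (A : Type w) [Ring A] [Algebra R A] [Module.Free R A]
    (L : Type w) [Field L] [Algebra F L] [Algebra R L] [IsScalarTower R F L]
    (h : ∀ (K' : Type u) [Field K'] [Algebra R K']
        [Algebra (IsLocalRing.ResidueField R) K']
        [IsScalarTower R (IsLocalRing.ResidueField R) K'],
      FiniteDimensional (IsLocalRing.ResidueField R) K' →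
        NoZeroDivisors (K' ⊗[R] A)) :
    NoZeroDivisors (L ⊗[R] A) :=
  stmt6_general R A L h
end

section
/- Let A be an associative unital algebra over a field F and L a field extension of F. If for every finite field extension F' of F the algebra F' ⊗_F A has no nonzero nilpotent elements, then L ⊗_F A has no nonzero nilpotent elements. -/
/-!
An element `z` of `L ⊗[F] A` already lives in `R ⊗[F] A` for a finitely generated subalgebra
`R ⊆ L`, and since `A` is flat over `F` the map `R ⊗[F] A → L ⊗[F] A` is injective, so it suffices
to show that `R ⊗[F] A` is reduced. Expanding a nilpotent `t : R ⊗[F] A` in an `F`-basis of `A`,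
its coefficients lie in `R`. For every maximal ideal `J` of `R` the residue field `R ⧸ J` is a
finite extension of `F` (Zariski's lemma), and the image of `t` in `(R ⧸ J) ⊗[F] A` is nilpotent,
hence zero; so every coefficient of `t` lies in the Jacobson radical of `R`. As `R` is a Jacobson
ring, this is the nilradical, which vanishes because `R` is a domain.
-/

open scoped TensorProduct

universe u v w

theorem Algebra.TensorProduct.basis_repr_rTensor {R S T M ι : Type*} [CommSemiring R]
    [Semiring S] [Algebra R S] [Semiring T] [Algebra R T] [AddCommMonoid M] [Module R M]
    (b : Module.Basis ι R M) (f : S →ₐ[R] T) (t : S ⊗[R] M) (i : ι) :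
    (basis T b).repr (f.toLinearMap.rTensor M t) i = f ((basis S b).repr t i) := by
  induction t using TensorProduct.induction_on with
  | zero => simp
  | tmul s m => simp [basis_repr_tmul]
  | add x y hx hy => simp [hx, hy]

theorem Algebra.FiniteType.eq_zero_of_forall_algHom {F : Type u} [Field F] {R : Type*}
    [CommRing R] [IsReduced R] [Algebra F R] [Algebra.FiniteType F R] {x : R}
    (hx : ∀ (K : Type u) [Field K] [Algebra F K], FiniteDimensional F K →
      ∀ ρ : R →ₐ[F] K, ρ x = 0) :
    x = 0 := by
  have : IsJacobsonRing R := isJacobsonRing_of_finiteType (A := F)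
  suffices x ∈ (⊥ : Ideal R).jacobson by
    rw [← Ideal.radical_eq_jacobson] at this
    exact IsReduced.eq_zero x (mem_nilradical.1 this)
  refine Ideal.mem_sInf.2 fun J ⟨_, hJ⟩ ↦ ?_
  let : Field (R ⧸ J) := Ideal.Quotient.field J
  have : Algebra.FiniteType F (R ⧸ J) :=
    .of_surjective (Ideal.Quotient.mkₐ F J) Ideal.Quotient.mk_surjective
  have : Module.Finite F (R ⧸ J) := finite_of_finite_type_of_isJacobsonRing F (R ⧸ J)
  have : Small.{u} (R ⧸ J) :=
    small_of_injective (Module.finBasis F (R ⧸ J)).equivFun.injective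
  let e : Shrink.{u} (R ⧸ J) ≃ₐ[F] R ⧸ J := Shrink.algEquiv F (R ⧸ J)
  have hK : FiniteDimensional F (Shrink.{u} (R ⧸ J)) := .equiv e.toLinearEquiv.symm
  simpa [Ideal.Quotient.eq_zero_iff_mem] using
    hx _ hK (e.symm.toAlgHom.comp (Ideal.Quotient.mkₐ F J))

theorem isReduced_tensorProduct_of_finiteType {F : Type u} [Field F] {A : Type*} [Ring A]
    [Algebra F A] {R : Type*} [CommRing R] [IsReduced R] [Algebra F R] [Algebra.FiniteType F R]
    (h : ∀ (K : Type u) [Field K] [Algebra F K], FiniteDimensional F K →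
      IsReduced (K ⊗[F] A)) :
    IsReduced (R ⊗[F] A) := by
  refine ⟨fun t ht ↦ ?_⟩
  let b := Module.Basis.ofVectorSpace F A
  refine (Algebra.TensorProduct.basis R b).repr.map_eq_zero_iff.1 (Finsupp.ext fun i ↦ ?_)
  refine Algebra.FiniteType.eq_zero_of_forall_algHom (F := F) fun K _ _ hK ρ ↦ ?_
  have hρt : ρ.toLinearMap.rTensor A t = 0 :=
    (h K hK).eq_zero _ (ht.map (Algebra.TensorProduct.rTensor A ρ))
  rw [← Algebra.TensorProduct.basis_repr_rTensor, hρt, map_zero, Finsupp.zero_apply]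

/-- let `A` be an associative unital algebra over a field `F` and `L` a field
extension of `F`. If for every finite field extension `F'` of `F` the algebra `F' ⊗[F] A`
has no nonzero nilpotent elements (i.e. is reduced), then `L ⊗[F] A` is reduced. -/
theorem stmt7 (F : Type u) [Field F] (A : Type v) [Ring A] [Algebra F A]
    (L : Type w) [Field L] [Algebra F L]
    (h : ∀ (F' : Type u) [Field F'] [Algebra F F'], FiniteDimensional F F' →
      IsReduced (F' ⊗[F] A)) :
    IsReduced (L ⊗[F] A) := by
  refine ⟨fun z hz ↦ ?_⟩
  obtain ⟨R, hR, t, rfl⟩ := TensorProduct.Algebra.exists_of_fg z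
  have : Algebra.FiniteType F R := R.fg_iff_finiteType.1 hR
  have hinj : Function.Injective (Algebra.TensorProduct.rTensor A R.val) :=
    Module.Flat.rTensor_preserves_injective_linearMap _ Subtype.val_injective
  obtain ⟨n, hn⟩ := hz
  have ht : IsNilpotent t := ⟨n, hinj <| by rw [map_pow, map_zero]; exact hn⟩
  rw [(isReduced_tensorProduct_of_finiteType h).eq_zero t ht, map_zero]
end

section
/- Let d = det(M) where M is the n×n matrix with entries M_{k,i} = ∂s_k/∂ξ_{in}. Then for a = (a_1, …, a_n) ∈ K^n and the companion-type matrix x_a, one has d(x_a) = 1. -/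
open MvPolynomial

/-- `s_k = tr(∧^k X)`: the sum of all `k × k` principal minors of the generic `n × n`
matrix, as a polynomial in `K[ξ_{ij}]`. -/
noncomputable def sPolyK (K : Type*) [CommRing K] (n k : ℕ) :
    MvPolynomial (Fin n × Fin n) K :=
  ∑ Λ ∈ (Finset.univ.powersetCard k : Finset (Finset (Fin n))),
    Matrix.det (Matrix.of fun i j : Λ => X ((i : Fin n), (j : Fin n)))

/-- `d = det M` where `M` is the `n × n` matrix with entries `M_{k,i} = ∂s_k/∂ξ_{in}`. -/
noncomputable def dPoly (K : Type*) [CommRing K] (n : ℕ) (hn : 1 ≤ n) :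
    MvPolynomial (Fin n × Fin n) K :=
  Matrix.det (Matrix.of fun k i : Fin n =>
    pderiv (i, (⟨n - 1, by omega⟩ : Fin n)) (sPolyK K n ((k : ℕ) + 1)))

/-- The companion-type matrix `x_a` attached to `a = (a_1, …, a_n)` (here `a k = a_{k+1}`):
subdiagonal entries `1`, last column `(a_n, a_{n-1}, …, a_1)ᵀ`, zeros elsewhere. -/
def companionX {K : Type*} [Field K] {n : ℕ} (a : Fin n → K) :
    Matrix (Fin n) (Fin n) K :=
  Matrix.of fun i j =>
    if h : (j : ℕ) = n - 1 then a ⟨n - 1 - (i : ℕ), by omega⟩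
    else if (i : ℕ) = (j : ℕ) + 1 then 1 else 0

/-!
Differentiating a principal minor in `ξ_{i,n}` replaces its last column by the unit vector `e_i`.
At `x_a` every other column `c` is `e_{c+1}`, so the result is the determinant of the 0/1 matrix
of the map `c ↦ c + 1`, `n ↦ i` on the index set `Λ`. It vanishes unless this map permutes `Λ`,
which forces `Λ = {i, …, n}`; there it is the sign `(-1)^{n-i}` of a cycle. Hence the matrix
`(∂s_k/∂ξ_{in})(x_a)` is antidiagonal with entries `(-1)^{k-1}`, and these signs cancel against
the sign of the order-reversing permutation.
-/

open Matrix Equiv Finset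

namespace Derivation

variable {R A M : Type*} [CommRing R] [CommRing A] [Algebra R A] [AddCommGroup M] [Module A M]
  [Module R M]

theorem leibniz_finset_prod (D : Derivation R A M) {ι : Type*} [DecidableEq ι] (s : Finset ι)
    (f : ι → A) : D (∏ i ∈ s, f i) = ∑ i ∈ s, (∏ j ∈ s.erase i, f j) • D (f i) := by
  induction s using Finset.induction_on with
  | empty => simp
  | insert x s hx ih =>
    rw [prod_insert hx, leibniz, ih, sum_insert hx, erase_insert hx, smul_sum, add_comm]
    congr 1
    refine sum_congr rfl fun i hi => ?_
    rw [erase_insert_of_ne (ne_of_mem_of_not_mem hi hx).symm, prod_insert (by simp [hx]),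
      smul_smul, mul_comm]

theorem map_det (D : Derivation R A A) {m : Type*} [Fintype m] [DecidableEq m]
    (B : Matrix m m A) : D B.det = ∑ j, (B.updateCol j fun i => D (B i j)).det := by
  simp only [det_apply, map_sum, sum_comm (γ := m)]
  refine sum_congr rfl fun σ _ => ?_
  rw [Units.smul_def, map_zsmul, leibniz_finset_prod, smul_sum]
  refine sum_congr rfl fun j _ => ?_
  rw [Units.smul_def, ← prod_erase_mul _ _ (mem_univ j), smul_eq_mul]
  simp only [updateCol_self]
  congr 2
  exact prod_congr rfl fun i hi => by rw [updateCol_ne (ne_of_mem_erase hi)]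

end Derivation

theorem pderiv_det_X_submatrix {R ι : Type*} [CommRing R] [DecidableEq ι] (Λ : Finset ι)
    (p q : ι) :
    pderiv (p, q) (det (of fun r c : Λ => (X (r.1, c.1) : MvPolynomial (ι × ι) R))) =
      if hq : q ∈ Λ then
        det ((of fun r c : Λ => X (r.1, c.1)).updateCol ⟨q, hq⟩ fun r => if r.1 = p then 1 else 0)
      else 0 := by
  rw [Derivation.map_det]
  simp only [of_apply]
  have hvanish : ∀ c : Λ, c.1 ≠ q → det ((of fun r c : Λ => X (r.1, c.1)).updateCol c
      fun r => pderiv (p, q) (X (r.1, c.1) : MvPolynomial (ι × ι) R)) = 0 := fun c hc =>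
    det_eq_zero_of_column_eq_zero c fun r => by simp [pderiv_X, hc]
  split_ifs with hq
  · rw [sum_eq_single ⟨q, hq⟩ (fun c _ hc => hvanish c fun h => hc (Subtype.ext h))
      (fun h => absurd (mem_univ _) h)]
    congr 2
    ext r
    simp [pderiv_X, Pi.single_apply]
  · exact sum_eq_zero fun c _ => hvanish c fun h => hq (h ▸ c.2)

section

variable {R α : Type*} [CommRing R] [DecidableEq α]

theorem mapsTo_and_injOn_of_det_ne_zero {f : α → α} {Λ : Finset α}
    (h : det (of fun r c : Λ => if r.1 = f c.1 then (1 : R) else 0) ≠ 0) :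
    Set.MapsTo f Λ Λ ∧ Set.InjOn f Λ := by
  refine ⟨fun c hc => ?_, fun c hc c' hc' hcc' => ?_⟩
  · by_contra hfc
    exact h (det_eq_zero_of_column_eq_zero ⟨c, hc⟩ fun r =>
      if_neg fun hr : r.1 = f c => hfc (hr ▸ r.2))
  · by_contra hne
    exact h (det_zero_of_column_eq (i := ⟨c, hc⟩) (j := ⟨c', hc'⟩) (by simpa using hne)
      fun r => by simp [hcc'])

theorem det_perm_of_support_subset [Fintype α] (σ : Perm α) {Λ : Finset α}
    (hsupp : ∀ x, σ x ≠ x → x ∈ Λ) :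
    det (of fun r c : Λ => if r.1 = σ c.1 then (1 : R) else 0) = Perm.sign σ := by
  have hfix : ∀ y ∉ Λ, σ y = y := fun y hy => by_contra fun h => hy (hsupp y h)
  have hσ : ∀ x, σ x ∈ Λ ↔ x ∈ Λ := fun x => by
    refine ⟨fun hx => ?_, fun hx => ?_⟩ <;> by_contra h
    · exact h (hfix x h ▸ hx)
    · exact h (by rwa [σ.injective (hfix _ h)])
  have : (of fun r c : Λ => if r.1 = σ c.1 then (1 : R) else 0) =
      ((σ.subtypePerm hσ).permMatrix R)ᵀ := by
    ext r c
    simp [PEquiv.toMatrix_apply, eq_comm, Subtype.ext_iff]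
  rw [this, det_transpose, det_permutation]
  congr 2
  convert Perm.sign_subtypePerm _ hσ hsupp

end

namespace Fin

def shiftLastTo {m : ℕ} (i c : Fin (m + 1)) : Fin (m + 1) :=
  if c = last m then i else c + 1

variable {m : ℕ} {i : Fin (m + 1)}

theorem val_shiftLastTo_of_ne_last {c : Fin (m + 1)} (hc : c ≠ last m) :
    ((shiftLastTo i c : Fin (m + 1)) : ℕ) = c + 1 := by
  rw [shiftLastTo, if_neg hc, val_add_one_of_lt (lt_last_iff_ne_last.mpr hc)]

theorem eq_Ici_of_mapsTo_shiftLastTo {Λ : Finset (Fin (m + 1))} (hlast : last m ∈ Λ)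
    (hmaps : Set.MapsTo (shiftLastTo i) Λ Λ) (hinj : Set.InjOn (shiftLastTo i) Λ) :
    Λ = Ici i := by
  have hi : i ∈ Λ := by simpa [shiftLastTo] using hmaps hlast
  -- `min' Λ` has a preimage under `shiftLastTo i`, and that preimage cannot be some `c ≠ last m`.
  have hmin : Λ.min' ⟨i, hi⟩ = i := by
    obtain ⟨c, hc, hcmin⟩ := surjOn_of_injOn_of_card_le _ hmaps hinj le_rfl (min'_mem Λ ⟨i, hi⟩)
    by_cases hcl : c = last m
    · simpa [shiftLastTo, hcl] using hcmin.symm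
    · have := min'_le Λ c hc
      rw [← hcmin, le_def, val_shiftLastTo_of_ne_last hcl] at this
      omega
  have hup : ∀ v, (i : ℕ) ≤ v → ∀ hv : v < m + 1, (⟨v, hv⟩ : Fin (m + 1)) ∈ Λ := by
    intro v hiv
    induction v, hiv using Nat.le_induction with
    | base => exact fun _ => hi
    | succ v _ ih =>
      intro hv
      have hvl : (⟨v, by omega⟩ : Fin (m + 1)) ≠ last m := by simp [Fin.ext_iff]; omega
      have hsucc : shiftLastTo i ⟨v, _⟩ = ⟨v + 1, hv⟩ := Fin.ext (val_shiftLastTo_of_ne_last hvl)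
      exact hsucc ▸ hmaps (ih (by omega))
  ext j
  simp only [mem_Ici]
  exact ⟨fun hj => hmin ▸ min'_le Λ j hj, fun hij => hup j (le_def.mp hij) j.2⟩

theorem det_shiftLastTo_submatrix {R : Type*} [CommRing R] (i : Fin (m + 1))
    {Λ : Finset (Fin (m + 1))} (hl : last m ∈ Λ) :
    det (of fun r c : Λ => if r.1 = shiftLastTo i c.1 then (1 : R) else 0) =
      if Λ = Ici i then (-1) ^ (m - i : ℕ) else 0 := by
  split_ifs with hΛ
  · subst hΛ
    have hcycle : ∀ c ∈ Ici i, cycleIcc i (last m) c = shiftLastTo i c := fun c hc =>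
      cycleIcc_of_le_of_le (mem_Ici.mp hc) (le_last c)
    have hsupp : ∀ x, cycleIcc i (last m) x ≠ x → x ∈ Ici i := fun x hx => by
      by_contra h
      exact hx (cycleIcc_of_lt (by simpa using h))
    simp only [← hcycle _ (Subtype.prop _)]
    rw [det_perm_of_support_subset _ hsupp, sign_cycleIcc_of_le (le_last i)]
    simp
  · by_contra hdet
    obtain ⟨hmaps, hinj⟩ := mapsTo_and_injOn_of_det_ne_zero hdet
    exact hΛ (eq_Ici_of_mapsTo_shiftLastTo hl hmaps hinj)

theorem sign_revPerm (n : ℕ) :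
    Perm.sign (revPerm : Perm (Fin n)) = ∏ j : Fin n, (-1) ^ (j : ℕ) := by
  rw [Perm.sign_eq_prod_prod_Iio]
  refine prod_congr rfl fun j _ => ?_
  simp only [revPerm_apply]
  rw [prod_congr rfl fun i hi => if_neg (not_lt.mpr (rev_le_rev.mpr (mem_Iio.mp hi).le)),
    Finset.prod_const, card_Iio]

end Fin

theorem eval_companionX_det_updateCol_last {K : Type*} [Field K] {m : ℕ} (a : Fin (m + 1) → K)
    (i : Fin (m + 1)) {Λ : Finset (Fin (m + 1))} (hl : Fin.last m ∈ Λ) :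
    eval (fun p => companionX a p.1 p.2) (det ((of fun r c : Λ => X (r.1, c.1)).updateCol
        ⟨Fin.last m, hl⟩ fun r => if r.1 = i then 1 else 0)) =
      det (of fun r c : Λ => if r.1 = Fin.shiftLastTo i c.1 then (1 : K) else 0) := by
  rw [RingHom.map_det]
  congr 1
  ext r c
  by_cases hc : c = ⟨Fin.last m, hl⟩
  · subst hc
    simp [Fin.shiftLastTo, apply_ite]
  · have hc' : c.1 ≠ Fin.last m := fun h => hc (Subtype.ext h)
    have hcv : (c.1 : ℕ) ≠ m := by simpa [Fin.ext_iff] using hc'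
    simp [updateCol_ne hc, companionX, hcv, Fin.ext_iff, Fin.val_shiftLastTo_of_ne_last hc']

theorem eval_companionX_pderiv_det_X_submatrix {K : Type*} [Field K] {m : ℕ}
    (a : Fin (m + 1) → K) (i : Fin (m + 1)) (Λ : Finset (Fin (m + 1))) :
    eval (fun p => companionX a p.1 p.2)
        (pderiv (i, Fin.last m) (det (of fun r c : Λ => X (r.1, c.1)))) =
      if Λ = Ici i then (-1) ^ (m - i : ℕ) else 0 := by
  rw [pderiv_det_X_submatrix]
  by_cases hl : Fin.last m ∈ Λ
  · rw [dif_pos hl, eval_companionX_det_updateCol_last a i hl, Fin.det_shiftLastTo_submatrix i hl]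
  · rw [dif_neg hl, map_zero, if_neg fun h : Λ = Ici i => hl (h ▸ mem_Ici.mpr (Fin.le_last i))]

theorem eval_companionX_pderiv_sPolyK {K : Type*} [Field K] {m : ℕ} (a : Fin (m + 1) → K)
    (k i : Fin (m + 1)) :
    eval (fun p => companionX a p.1 p.2) (pderiv (i, Fin.last m) (sPolyK K (m + 1) (k + 1))) =
      if i = k.rev then (-1) ^ (k : ℕ) else 0 := by
  simp only [sPolyK, map_sum, eval_companionX_pderiv_det_X_submatrix]
  have hmem : Ici i ∈ powersetCard (k + 1) univ ↔ i = k.rev := by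
    rw [mem_powersetCard, Fin.card_Ici, Fin.ext_iff, Fin.val_rev]
    have := k.isLt
    simp only [subset_univ, true_and]
    omega
  simp only [sum_ite_eq', hmem]
  split_ifs with hik
  · rw [hik, Fin.val_rev]
    congr 1
    omega
  · rfl

/-- for every `a ∈ K^n`, evaluating `d` at the companion-type matrix `x_a`
gives `d(x_a) = 1`. -/
theorem stmt11 (K : Type*) [Field K] (n : ℕ) (hn : 1 ≤ n) (a : Fin n → K) :
    eval (fun p : Fin n × Fin n => companionX a p.1 p.2) (dPoly K n hn) = 1 := by
  obtain ⟨m, rfl⟩ := Nat.exists_eq_add_of_le' hn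
  have hM : (of fun k i : Fin (m + 1) =>
        pderiv (i, (⟨m + 1 - 1, by omega⟩ : Fin (m + 1))) (sPolyK K (m + 1) (k + 1))).map
          (eval fun p => companionX a p.1 p.2) =
      diagonal (fun k : Fin (m + 1) => (-1 : K) ^ (k : ℕ)) * Fin.revPerm.permMatrix K := by
    ext k i
    have hlast : (⟨m + 1 - 1, by omega⟩ : Fin (m + 1)) = Fin.last m := Fin.ext (by simp)
    rw [map_apply, of_apply, hlast, eval_companionX_pderiv_sPolyK, diagonal_mul]
    simp [PEquiv.toMatrix_apply, eq_comm]
  rw [dPoly, RingHom.map_det, RingHom.mapMatrix_apply, hM, det_mul, det_diagonal, det_permutation,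
    Fin.sign_revPerm]
  push_cast
  simp [← prod_mul_distrib, ← mul_pow]
end

section
/- For n ≥ 2 and odd l > 1, let f_i ∈ ℤ[u_1, …, u_{n-1}] be the unique polynomial with sym(l·ϖ_i) = f_i(sym(ϖ_1), …, sym(ϖ_{n-1})) in the invariant ring (ℤP)^W of the weight lattice of sl_n. With the degree reverse lexicographic order with u_1 > ⋯ > u_{n-1}, the leading term of f_i is u_i^l, and every other monomial appearing in f_i has total degree ≤ l and all exponents < l. -/
open MvPolynomial

/-- The degree reverse lexicographic order with `u_1 > ⋯ > u_{n-1}` (variables indexed so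
that a smaller index is a bigger variable): `α <_drl β` iff `deg α < deg β`, or the total
degrees agree and at the last index where they differ, `β` has the smaller exponent. -/
def drlLt {m : ℕ} (α β : Fin m →₀ ℕ) : Prop :=
  (∑ j, α j) < (∑ j, β j) ∨
  ((∑ j, α j) = (∑ j, β j) ∧ ∃ i, β i < α i ∧ ∀ j, i < j → α j = β j)

/-!
Let `F(e_1, …, e_n) = e_{i+1}(x_0^l, …, x_{n-1}^l)`, the variables `u_0, …, u_{n-1}` of `F`
being numbered from `0` as in the statement. Substituting `e_{j+1}` for `u_j` sends polynomials
of weight `d`, where `u_j` has weight `j + 1`, to homogeneous polynomials of degree `d`, and it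
is injective; so every monomial `α` of `F` has weight `(i + 1) l`. In the lexicographic order
the leading monomial of `e^α` is `Fin.accumulate α`, whose first exponent is `|α|`, and distinct
`α` give distinct leading monomials. Hence the leading monomial `(x_0 ⋯ x_i)^l` of the
right-hand side is that of `u_i^l`, which therefore has coefficient `1` in `F`, and `|α| ≤ l`
for every monomial of `F`.

Setting `u_{n-1} = 1` drops the last exponent `a`, so a monomial `m` of `f` satisfies
`|m| + a ≤ l` and `∑ (j + 1) m_j + n a = (i + 1) l`. If `|m| = l` then `a = 0`, and unless
`m = u_i^l` some `u_j` with `j > i` occurs in `m` (the drl comparison) and `m` is no pure power.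
-/

open Finset AddMonoidAlgebra

namespace Finsupp

lemma apply_le_apply_of_toLex_le {α N : Type*} [LinearOrder α] [Zero N] [LinearOrder N]
    {x y : α →₀ N} {a : α} (ha : IsBot a) (h : toLex x ≤ toLex y) : x a ≤ y a :=
  le_of_not_gt fun hlt => h.not_gt ⟨a, fun d hd => absurd (ha d) hd.not_ge, hlt⟩

lemma eq_single_of_sum_le {ι : Type*} [Fintype ι] {m : ι →₀ ℕ} {j : ι}
    (h : ∑ k, m k ≤ m j) : m = single j (m j) := by
  classical
  ext k
  by_cases hk : k = j
  · simp [hk]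
  · have := (Finset.sum_pair (f := fun k => m k) (Ne.symm hk)).symm.trans_le
      (Finset.sum_le_sum_of_subset (subset_univ {j, k}))
    rw [single_eq_of_ne hk]
    omega

variable {N : ℕ}

lemma sum_succ_mul_single (i : Fin N) (c : ℕ) :
    ∑ j : Fin N, ((j : ℕ) + 1) * single i c j = ((i : ℕ) + 1) * c := by
  simp [single_apply]

lemma eq_single_of_sum_succ_mul_eq {m : Fin N →₀ ℕ} {i : Fin N}
    (hsupp : ∀ j ∈ m.support, j ≤ i)
    (hw : ∑ j : Fin N, ((j : ℕ) + 1) * m j = ((i : ℕ) + 1) * ∑ j, m j) :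
    m = single i (∑ j, m j) := by
  have hle : ∀ j ∈ (univ : Finset (Fin N)), ((j : ℕ) + 1) * m j ≤ ((i : ℕ) + 1) * m j :=
    fun j _ => by
      by_cases hj : m j = 0
      · simp [hj]
      · exact Nat.mul_le_mul_right _ (Nat.succ_le_succ (hsupp j (mem_support_iff.2 hj)))
  rw [Finset.mul_sum] at hw
  have hzero : ∀ j ≠ i, m j = 0 := fun j hj => by
    by_contra h
    have := Nat.eq_of_mul_eq_mul_right (Nat.pos_of_ne_zero h)
      ((sum_eq_sum_iff_of_le hle).1 hw j (mem_univ j))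
    exact hj (Fin.ext (by omega))
  rw [Finset.sum_eq_single i (fun j _ => hzero j) (by simp)]
  ext j
  by_cases hj : j = i
  · simp [hj]
  · simp [hzero j hj, single_eq_of_ne hj]

lemma eq_of_comapDomain_castSucc_eq {α β : Fin (N + 1) →₀ ℕ}
    (h : α.comapDomain Fin.castSucc (Fin.castSucc_injective N).injOn =
      β.comapDomain Fin.castSucc (Fin.castSucc_injective N).injOn)
    (hlast : α (Fin.last N) = β (Fin.last N)) : α = β := by
  ext j
  induction j using Fin.lastCases with
  | last => exact hlast
  | cast k => simpa using DFunLike.congr_fun h k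

end Finsupp

lemma drlLt_single_of_sum_succ_mul_eq {N : ℕ} {m : Fin N →₀ ℕ} {i : Fin N} {l a : ℕ}
    (hne : m ≠ Finsupp.single i l) (hsum : ∑ j, m j + a ≤ l)
    (hw : ∑ j : Fin N, ((j : ℕ) + 1) * m j + (N + 1) * a = ((i : ℕ) + 1) * l) :
    drlLt m (Finsupp.single i l) ∧ ∑ j, m j ≤ l ∧ ∀ j, m j < l := by
  have hle_sum : ∀ j, m j ≤ ∑ k, m k := fun j =>
    single_le_sum (fun k _ => Nat.zero_le (m k)) (mem_univ j)
  rcases (le_of_add_le_left hsum).lt_or_eq with hlt | heq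
  · exact ⟨Or.inl (by rwa [Finsupp.univ_sum_single_apply]), hlt.le,
      fun j => (hle_sum j).trans_lt hlt⟩
  obtain rfl : a = 0 := by omega
  rw [mul_zero, add_zero, ← heq] at hw
  have hm : m.support.Nonempty := by
    rw [Finsupp.support_nonempty_iff]
    rintro rfl
    simp [← heq] at hne
  set j₀ := m.support.max' hm
  have hj₀ : 0 < m j₀ := Nat.pos_of_ne_zero (Finsupp.mem_support_iff.1 (m.support.max'_mem hm))
  have hij₀ : i < j₀ := by
    by_contra! h
    exact hne <| heq ▸ Finsupp.eq_single_of_sum_succ_mul_eq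
      (fun j hj => (m.support.le_max' j hj).trans h) hw
  refine ⟨Or.inr ⟨heq.trans (Finsupp.univ_sum_single_apply i l).symm, j₀, ?_,
    fun j hj => ?_⟩, heq.le, fun j => ?_⟩
  · rwa [Finsupp.single_eq_of_ne' hij₀.ne]
  · rw [Finsupp.single_eq_of_ne' (hij₀.trans hj).ne,
      Finsupp.notMem_support_iff.1 fun hj' => (m.support.le_max' j hj').not_gt hj]
  · refine (hle_sum j).trans_eq heq |>.lt_of_ne fun hj => hne ?_
    have hmj : m = Finsupp.single j l := hj ▸ Finsupp.eq_single_of_sum_le (heq.trans hj.symm).le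
    rw [hmj, Finsupp.sum_succ_mul_single, Finsupp.univ_sum_single_apply] at hw
    have := Nat.eq_of_mul_eq_mul_right (hj₀.trans_le ((hle_sum j₀).trans_eq heq)) hw
    rwa [Fin.ext (by omega : (j : ℕ) = i)] at hmj

namespace MvPolynomial

section Grading

variable {σ τ R : Type*} [CommSemiring R] {w : σ → ℕ} {g : σ → MvPolynomial τ R}

lemma IsWeightedHomogeneous.aeval_isHomogeneous (hg : ∀ i, (g i).IsHomogeneous (w i))
    {φ : MvPolynomial σ R} {d : ℕ} (hφ : φ.IsWeightedHomogeneous w d) :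
    (aeval g φ).IsHomogeneous d := by
  rw [φ.as_sum, map_sum]
  refine IsHomogeneous.sum _ _ _ fun α hα => ?_
  rw [aeval_monomial, ← hφ (mem_support_iff.1 hα), Finsupp.weight_apply, Finsupp.prod,
    algebraMap_eq]
  convert (IsHomogeneous.prod _ _ _ fun i _ => (hg i).pow (α i)).C_mul _ using 1
  simp only [Finsupp.sum, smul_eq_mul, mul_comm]

lemma homogeneousComponent_aeval (hg : ∀ i, (g i).IsHomogeneous (w i)) (d : ℕ)
    (φ : MvPolynomial σ R) :
    homogeneousComponent d (aeval g φ) = aeval g (weightedHomogeneousComponent w d φ) := by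
  induction φ using MvPolynomial.induction_on' with
  | monomial α c =>
    have hα : (monomial α c).IsWeightedHomogeneous w (Finsupp.weight w α) :=
      isWeightedHomogeneous_monomial _ _ _ rfl
    rw [homogeneousComponent_of_mem (hα.aeval_isHomogeneous hg),
      weightedHomogeneousComponent_of_mem hα, apply_ite (aeval g), map_zero]
  | add p q hp hq => simp only [map_add, hp, hq]

lemma isWeightedHomogeneous_of_isHomogeneous_aeval (hg : ∀ i, (g i).IsHomogeneous (w i))
    (hinj : Function.Injective (aeval (R := R) g)) {φ : MvPolynomial σ R} {d : ℕ}
    (h : (aeval g φ).IsHomogeneous d) : φ.IsWeightedHomogeneous w d := by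
  have : aeval g (weightedHomogeneousComponent w d φ) = aeval g φ := by
    rw [← homogeneousComponent_aeval hg, homogeneousComponent_of_mem h, if_pos rfl]
  exact hinj this ▸ weightedHomogeneousComponent_isWeightedHomogeneous d φ

lemma isHomogeneous_esymm (σ R : Type*) [CommSemiring R] [Fintype σ] (k : ℕ) :
    (esymm σ R k).IsHomogeneous k := by
  refine IsHomogeneous.sum _ _ _ fun t ht => ?_
  have := IsHomogeneous.prod t (fun i => (X i : MvPolynomial σ R)) (fun _ => 1)
    fun i _ => isHomogeneous_X R i
  simpa [(mem_powersetCard.1 ht).2] using this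

end Grading

section LeadingTerms

variable {σ R : Type*} [CommSemiring R] [LinearOrder σ]

lemma supDegree_and_leadingCoeff_expand {l : ℕ} (hl : l ≠ 0) {p : MvPolynomial σ R}
    (hp : p ≠ 0) :
    ofLex (supDegree toLex (expand l p)) = l • ofLex (supDegree toLex p) ∧
      leadingCoeff toLex (expand l p) = leadingCoeff toLex p := by
  obtain ⟨d₀, hd₀, he⟩ := exists_supDegree_mem_support toLex hp
  have hsupp : ∀ d ∈ p.support,
      supDegree toLex (monomial (l • d) (p.coeff d)) = toLex (l • d) :=
    fun d hd => supDegree_single_ne_zero _ (mem_support_iff.1 hd)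
  have key := supDegree_leadingCoeff_sum_eq (D := toLex) (s := p.support) (i := d₀) hd₀
    (f := fun d => monomial (l • d) (p.coeff d)) fun d hd hne => by
      rw [hsupp d hd, hsupp d₀ hd₀, toLex_smul, toLex_smul]
      exact nsmul_lt_nsmul_right hl
        ((Finset.le_sup (f := toLex) hd).trans_eq he |>.lt_of_ne (toLex.injective.ne hne))
  have hexp : expand l p = ∑ d ∈ p.support, monomial (l • d) (p.coeff d) := by
    conv_lhs => rw [p.as_sum]
    simp only [map_sum, expand_monomial]
  rw [hexp, key.1, key.2, hsupp d₀ hd₀, he]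
  refine ⟨rfl, (leadingCoeff_single toLex.injective _ _).trans ?_⟩
  rw [leadingCoeff, he, Function.leftInverse_invFun toLex.injective]
  rfl

variable [Nontrivial R] {n : ℕ}

lemma supDegree_and_leadingCoeff_expand_esymm {l : ℕ} (hl : l ≠ 0) (k : Fin n) :
    ⇑(ofLex (supDegree toLex (expand l (esymm (Fin n) R (k + 1))))) =
      Fin.accumulate n n (Finsupp.single k l) ∧
    leadingCoeff toLex (expand l (esymm (Fin n) R (k + 1))) = 1 := by
  have hmonic : Monic toLex (esymm (Fin n) R (k + 1)) := monic_esymm k.isLt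
  obtain ⟨hsd, hlc⟩ := supDegree_and_leadingCoeff_expand hl hmonic.ne_zero
  refine ⟨?_, hlc.trans hmonic⟩
  rw [hsd, Finsupp.coe_smul, supDegree_esymm k.isLt, ← map_nsmul, ← Finsupp.coe_smul,
    Finsupp.smul_single, smul_eq_mul, mul_one]

end LeadingTerms

section Esymm

variable {R : Type*} {n m : ℕ}

lemma exists_supDegree_esymmAlgHom_eq [CommSemiring R] (hnm : n ≤ m)
    {F : MvPolynomial (Fin n) R} (hF : F ≠ 0) :
    ∃ α₀ ∈ F.support,
      (∀ α ∈ F.support, supDegree toLex (esymmAlgHomMonomial (Fin m) α (F.coeff α)) ≤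
        supDegree toLex (esymmAlgHomMonomial (Fin m) α₀ (F.coeff α₀))) ∧
      supDegree toLex (esymmAlgHom (Fin m) R n F).val =
        supDegree toLex (esymmAlgHomMonomial (Fin m) α₀ (F.coeff α₀)) ∧
      leadingCoeff toLex (esymmAlgHom (Fin m) R n F).val = F.coeff α₀ := by
  set D := fun α => supDegree toLex (esymmAlgHomMonomial (Fin m) α (F.coeff α))
  obtain ⟨α₀, hα₀, hmax⟩ := exists_max_image F.support D (support_nonempty.2 hF)
  have hD : ∀ α ∈ F.support, ⇑(ofLex (D α)) = Fin.accumulate n m α := fun α hα =>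
    supDegree_esymmAlgHomMonomial (mem_support_iff.1 hα) α hnm
  have hsum : (esymmAlgHom (Fin m) R n F).val =
      ∑ α ∈ F.support, esymmAlgHomMonomial (Fin m) α (F.coeff α) := by
    conv_lhs => rw [F.as_sum]
    rw [map_sum, AddSubmonoidClass.coe_finsetSum]
    rfl
  obtain ⟨hsd, hlc⟩ := supDegree_leadingCoeff_sum_eq (D := toLex) hα₀ fun α hα hne =>
    (hmax α hα).lt_of_ne fun h => hne <| DFunLike.ext' <| Fin.accumulate_injective hnm <| by
      rw [← hD α hα, ← hD α₀ hα₀, h]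
  refine ⟨α₀, hα₀, hmax, hsum ▸ hsd, ?_⟩
  rw [hsum, hlc, leadingCoeff_esymmAlgHomMonomial _ hnm]

lemma aeval_esymm_injective (R : Type*) [CommRing R] (n : ℕ) :
    Function.Injective (aeval (R := R) fun j : Fin n => esymm (Fin n) R (j + 1)) := by
  have h := Subtype.val_injective.comp (esymmAlgHom_fin_injective (m := n) R le_rfl)
  convert h using 1
  funext p
  exact (esymmAlgHom_apply p).symm

lemma coeff_single_eq_one_and_sum_le [CommSemiring R] [Nontrivial R] {l : ℕ} (hl : l ≠ 0)
    {k : Fin n} {F : MvPolynomial (Fin n) R}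
    (hF : aeval (fun j : Fin n => esymm (Fin n) R (j + 1)) F =
      expand l (esymm (Fin n) R (k + 1))) :
    F.coeff (Finsupp.single k l) = 1 ∧ ∀ α ∈ F.support, ∑ j, α j ≤ l := by
  rw [← esymmAlgHom_apply] at hF
  obtain ⟨hsd, hlc⟩ := supDegree_and_leadingCoeff_expand_esymm (R := R) hl k
  have hF0 : F ≠ 0 := by
    rintro rfl
    simp [← hF] at hlc
  obtain ⟨α₀, hα₀, hmax, hsd₀, hlc₀⟩ := exists_supDegree_esymmAlgHom_eq le_rfl hF0
  have hD : ∀ α ∈ F.support, ⇑(ofLex (supDegree toLex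
      (esymmAlgHomMonomial (Fin n) α (F.coeff α)))) = Fin.accumulate n n α := fun α hα =>
    supDegree_esymmAlgHomMonomial (mem_support_iff.1 hα) α le_rfl
  have hα₀_eq : α₀ = Finsupp.single k l :=
    DFunLike.ext' <| Fin.accumulate_injective le_rfl <| by
      rw [← hD α₀ hα₀, ← hsd₀, hF, hsd]
  refine ⟨hα₀_eq ▸ hlc₀.symm.trans (hF ▸ hlc), fun α hα => ?_⟩
  have hbot : IsBot (⟨0, k.pos⟩ : Fin n) := fun j => Nat.zero_le _
  have hfirst (β : Fin n →₀ ℕ) : Fin.accumulate n n β ⟨0, k.pos⟩ = ∑ j, β j := by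
    simp [Fin.accumulate_apply]
  calc ∑ j, α j ≤ ∑ j, α₀ j := by
        rw [← hfirst, ← hfirst, ← hD α hα, ← hD α₀ hα₀]
        exact Finsupp.apply_le_apply_of_toLex_le hbot (hmax α hα)
    _ = l := by rw [hα₀_eq, Finsupp.univ_sum_single_apply]

lemma sum_succ_mul_eq_of_mem_support [CommRing R] {l : ℕ} {k : Fin n}
    {F : MvPolynomial (Fin n) R}
    (hF : aeval (fun j : Fin n => esymm (Fin n) R (j + 1)) F =
      expand l (esymm (Fin n) R (k + 1)))
    {α : Fin n →₀ ℕ} (hα : α ∈ F.support) :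
    ∑ j : Fin n, ((j : ℕ) + 1) * α j = (k + 1) * l := by
  have hRHS : (expand l (esymm (Fin n) R (k + 1))).IsHomogeneous (l * (k + 1)) :=
    (isHomogeneous_esymm _ R _).aeval _ fun j => isHomogeneous_X_pow j l
  rw [← hF] at hRHS
  have hw := isWeightedHomogeneous_of_isHomogeneous_aeval (w := fun j : Fin n => (j : ℕ) + 1)
    (fun j => isHomogeneous_esymm _ R _) (aeval_esymm_injective R n) hRHS (mem_support_iff.1 hα)
  rw [Finsupp.weight_apply, Finsupp.sum_fintype _ _ fun _ => by simp] at hw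
  simpa only [smul_eq_mul, mul_comm] using hw

end Esymm

section LastVariableOne

variable {R : Type*} {N : ℕ}

lemma aeval_monomial_eq_monomial_comapDomain [CommSemiring R]
    {g : Fin (N + 1) → MvPolynomial (Fin N) R} (hg : ∀ k, g (Fin.castSucc k) = X k)
    (hlast : g (Fin.last N) = 1) (α : Fin (N + 1) →₀ ℕ) (c : R) :
    aeval g (monomial α c) =
      monomial (α.comapDomain Fin.castSucc (Fin.castSucc_injective N).injOn) c := by
  rw [aeval_monomial, Finsupp.prod_fintype _ _ fun _ => pow_zero _, Fin.prod_univ_castSucc,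
    hlast, one_pow, mul_one, monomial_eq, Finsupp.prod_fintype _ _ fun _ => pow_zero _]
  simp [hg]

lemma coeff_aeval_eq_sum [CommSemiring R] {g : Fin (N + 1) → MvPolynomial (Fin N) R}
    (hg : ∀ k, g (Fin.castSucc k) = X k) (hlast : g (Fin.last N) = 1)
    (F : MvPolynomial (Fin (N + 1)) R) (m : Fin N →₀ ℕ) :
    (aeval g F).coeff m = ∑ α ∈ F.support,
      if α.comapDomain Fin.castSucc (Fin.castSucc_injective N).injOn = m then F.coeff α
      else 0 := by
  conv_lhs => rw [F.as_sum]
  simp only [map_sum, aeval_monomial_eq_monomial_comapDomain hg hlast, coeff_sum, coeff_monomial]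

theorem coeff_aeval_single_eq_one_and_drlLt [CommRing R] [Nontrivial R] {l : ℕ} (hl : l ≠ 0)
    (i : Fin N) {F : MvPolynomial (Fin (N + 1)) R}
    (hF : aeval (fun j : Fin (N + 1) => esymm (Fin (N + 1)) R (j + 1)) F =
      expand l (esymm (Fin (N + 1)) R (i + 1)))
    {g : Fin (N + 1) → MvPolynomial (Fin N) R} (hg : ∀ k, g (Fin.castSucc k) = X k)
    (hlast : g (Fin.last N) = 1) :
    (aeval g F).coeff (Finsupp.single i l) = 1 ∧
    ∀ m ∈ (aeval g F).support, m ≠ Finsupp.single i l →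
      drlLt m (Finsupp.single i l) ∧ (∑ j, m j) ≤ l ∧ ∀ j, m j < l := by
  set init := fun α : Fin (N + 1) →₀ ℕ =>
    α.comapDomain Fin.castSucc (Fin.castSucc_injective N).injOn
  obtain ⟨hcoeff, hdeg⟩ := coeff_single_eq_one_and_sum_le (k := Fin.castSucc i) hl hF
  have hsplit (α) (hα : α ∈ F.support) : ∑ j, init α j + α (Fin.last N) ≤ l ∧
      ∑ j : Fin N, ((j : ℕ) + 1) * init α j + (N + 1) * α (Fin.last N) =
        ((i : ℕ) + 1) * l := by
    have hw := sum_succ_mul_eq_of_mem_support (k := Fin.castSucc i) hF hα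
    have hs := hdeg α hα
    rw [Fin.sum_univ_castSucc] at hw hs
    simpa [init] using And.intro hs hw
  have hinit_single : init (Finsupp.single (Fin.castSucc i) l) = Finsupp.single i l :=
    Finsupp.comapDomain_single _ _ _ _
  have hinit : ∀ α ∈ F.support, init α = Finsupp.single i l →
      α = Finsupp.single (Fin.castSucc i) l := fun α hα h => by
    refine Finsupp.eq_of_comapDomain_castSucc_eq (h.trans hinit_single.symm) ?_
    have := (hsplit α hα).1
    rw [h, Finsupp.univ_sum_single_apply] at this
    rw [Finsupp.single_eq_of_ne' (Fin.castSucc_ne_last i)]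
    omega
  constructor
  · rw [coeff_aeval_eq_sum hg hlast, Finset.sum_eq_single_of_mem _
      (mem_support_iff.2 (hcoeff ▸ one_ne_zero)) fun β hβ hne => if_neg (mt (hinit β hβ) hne),
      if_pos hinit_single, hcoeff]
  · intro m hm hne
    rw [mem_support_iff, coeff_aeval_eq_sum hg hlast] at hm
    obtain ⟨α, hα, hαm⟩ := exists_ne_zero_of_sum_ne_zero hm
    obtain rfl : init α = m := by_contra fun h => hαm (if_neg h)
    exact drlLt_single_of_sum_succ_mul_eq hne (hsplit α hα).1 (hsplit α hα).2

end LastVariableOne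

end MvPolynomial

theorem stmt14_general (n l : ℕ) (hl : 1 < l) (i : Fin (n - 1))
    (F : MvPolynomial (Fin n) ℤ)
    (hF : aeval (fun j : Fin n => esymm (Fin n) ℤ ((j : ℕ) + 1)) F =
          aeval (fun j : Fin n => (X j : MvPolynomial (Fin n) ℤ) ^ l)
            (esymm (Fin n) ℤ ((i : ℕ) + 1)))
    (f : MvPolynomial (Fin (n - 1)) ℤ)
    (hf : f = aeval (fun j : Fin n =>
        if h : (j : ℕ) < n - 1 then (X (⟨j, h⟩ : Fin (n - 1)) : MvPolynomial (Fin (n - 1)) ℤ)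
        else 1) F) :
    f.coeff (Finsupp.single i l) = 1 ∧
    ∀ m ∈ f.support, m ≠ Finsupp.single i l →
      drlLt m (Finsupp.single i l) ∧ (∑ j, m j) ≤ l ∧ ∀ j, m j < l := by
  obtain ⟨N, rfl⟩ : ∃ N, n = N + 1 := ⟨n - 1, by have := i.pos; omega⟩
  subst hf
  exact coeff_aeval_single_eq_one_and_drlLt (by omega) i hF
    (fun k => dif_pos k.isLt) (dif_neg (by simp))

/-- for `n ≥ 2` and odd `l > 1`, let `f_i ∈ ℤ[u_1, …, u_{n-1}]` be the
polynomial with `sym(l·ϖ_i) = f_i(sym(ϖ_1), …, sym(ϖ_{n-1}))`; equivalently (as in the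
paper) `f_i = F_i(u_1, …, u_{n-1}, 1)` where `σ_i(x_1^l, …, x_n^l) = F_i(σ_1, …, σ_n)`.
Then, in the degree reverse lexicographic order with `u_1 > ⋯ > u_{n-1}`, the leading
term of `f_i` is `u_i^l`, and every other monomial of `f_i` has total degree `≤ l` and
all exponents `< l`. -/
theorem stmt14 (n l : ℕ) (hn : 2 ≤ n) (hodd : Odd l) (hl : 1 < l) (i : Fin (n - 1))
    (F : MvPolynomial (Fin n) ℤ)
    (hF : aeval (fun j : Fin n => esymm (Fin n) ℤ ((j : ℕ) + 1)) F =
          aeval (fun j : Fin n => (X j : MvPolynomial (Fin n) ℤ) ^ l)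
            (esymm (Fin n) ℤ ((i : ℕ) + 1)))
    (f : MvPolynomial (Fin (n - 1)) ℤ)
    (hf : f = aeval (fun j : Fin n =>
        if h : (j : ℕ) < n - 1 then (X (⟨j, h⟩ : Fin (n - 1)) : MvPolynomial (Fin (n - 1)) ℤ)
        else 1) F) :
    f.coeff (Finsupp.single i l) = 1 ∧
    ∀ m ∈ f.support, m ≠ Finsupp.single i l →
      drlLt m (Finsupp.single i l) ∧ (∑ j, m j) ≤ l ∧ ∀ j, m j < l :=
  stmt14_general n l hl i F hF f hf
end

section
/- Let K be a field of characteristic p > 0, B a commutative reduced K-algebra which is free as a module over a subalgebra A with a basis of restricted monomials u_1^{k_1}⋯u_t^{k_t} (0 ≤ k_i < l) in elements u_1, …, u_t, where l is a power of p. If B is an integral domain, s ∈ B, and u^l = s with u transcendental-like in the sense that B[x]/(x^l − s) is the next algebra in the tower, then s is not a p-th power in the field of fractions of B, and hence x^l − s is irreducible over Frac(B). -/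
open Polynomial

set_option maxHeartbeats 1000000 in
set_option synthInstance.maxHeartbeats 400000 in
/-- inductive step of Step 2 of the UFD theorem: let `K` be a field of
characteristic `p > 0` and `l = p^e` a power of `p`. Let `C` be a commutative reduced
`K`-algebra, `B ⊆ C` a subalgebra which is an integral domain, `s ∈ B` and `u ∈ C` with
`u^l = s`, such that the restricted powers `1, u, …, u^{l-1}` are linearly independent
over `B` (as happens for the restricted-monomial basis in the paper). Then `s` is not a
`p`-th power in the field of fractions of `B`, and hence `x^l − s` is irreducible over
`Frac(B)`. -/
theorem stmt16 (K : Type*) [Field K] (p : ℕ) [CharP K p] (hp : p.Prime)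
    (l e : ℕ) (hl : l = p ^ e) (he : 1 ≤ e)
    (C : Type*) [CommRing C] [IsReduced C] [Algebra K C]
    (B : Subalgebra K C) (hdom : IsDomain B)
    (s : B) (u : C) (hu : u ^ l = (s : C))
    (hli : LinearIndependent B (fun k : Fin l => u ^ (k : ℕ))) :
    (¬ ∃ y : FractionRing B, y ^ p = algebraMap B (FractionRing B) s) ∧
    Irreducible (Polynomial.X ^ l -
      Polynomial.C (algebraMap B (FractionRing B) s)) := by
  haveI := hdom
  have hp1 : 1 < p := hp.one_lt
  haveI := Fact.mk hp
  have hBchar : CharP B p := charP_of_injective_algebraMap (algebraMap K B).injective p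
  have hCnt : Nontrivial C := by
    refine ⟨⟨0, 1, fun h => ?_⟩⟩
    have : (0 : B) = 1 := Subtype.ext (by simpa using h)
    exact zero_ne_one this
  have hCchar : CharP C p := charP_of_injective_algebraMap (algebraMap K C).injective p
  set F := FractionRing B
  have hFchar : CharP F p :=
    charP_of_injective_algebraMap (IsFractionRing.injective B F) p
  haveI : ExpChar F p := ExpChar.prime hp
  -- index p^(e-1) < l
  have hlt : p ^ (e - 1) < l := by
    rw [hl]
    exact Nat.pow_lt_pow_right hp1 (by omega)
  have h0l : 0 < l := Nat.lt_of_le_of_lt (Nat.zero_le _) hlt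
  -- main part: s is not a p-th power in F
  have main : ¬ ∃ y : F, y ^ p = algebraMap B F s := by
    rintro ⟨y, hy⟩
    obtain ⟨⟨n, d⟩, hx⟩ := IsLocalization.surj (nonZeroDivisors B) y
    simp only at hx
    have hd0 : (d : B) ≠ 0 := nonZeroDivisors.coe_ne_zero d
    -- n^p = s * d^p in B
    have key : (n : B) ^ p = s * (d : B) ^ p := by
      apply IsFractionRing.injective B F
      rw [map_pow, ← hx, mul_pow, hy, map_mul, map_pow]
    -- pass to C
    have keyC : (n : C) ^ p = (s : C) * ((d : B) : C) ^ p := by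
      have := congrArg (Subalgebra.val B) key
      simpa using this
    have hupow : (s : C) = (u ^ (p ^ (e - 1))) ^ p := by
      rw [← pow_mul, ← pow_succ, Nat.sub_add_cancel he, ← hl, hu]
    have hfrob : ((n : C) - u ^ (p ^ (e - 1)) * ((d : B) : C)) ^ p = 0 := by
      rw [sub_pow_char, mul_pow, ← hupow, keyC]
      ring
    have heq : (n : C) = u ^ (p ^ (e - 1)) * ((d : B) : C) :=
      sub_eq_zero.mp (IsReduced.eq_zero _ ⟨p, hfrob⟩)
    -- contradiction with linear independence
    set i0 : Fin l := ⟨0, h0l⟩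
    set i1 : Fin l := ⟨p ^ (e - 1), hlt⟩
    have hne : i0 ≠ i1 := by
      simp only [i0, i1, Fin.mk.injEq, Ne]
      have := Nat.one_le_iff_ne_zero.mp (Nat.one_le_pow (e-1) p (by omega))
      omega
    have hinj : Function.Injective ![i0, i1] := by
      intro a b hab
      fin_cases a <;> fin_cases b <;> simp_all
    have hpair := hli.comp ![i0, i1] hinj
    have hfun : ((fun k : Fin l => u ^ (k : ℕ)) ∘ ![i0, i1]) =
        ![(1 : C), u ^ (p ^ (e - 1))] := by
      funext j
      fin_cases j <;> simp [i0, i1]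
    rw [hfun] at hpair
    have hrel : (-n : B) • (1 : C) + (d : B) • u ^ (p ^ (e - 1)) = 0 := by
      rw [Algebra.smul_def, Algebra.smul_def]
      simp only [Subalgebra.algebraMap_eq]
      simp [heq]
      ring
    obtain ⟨-, h2⟩ := hpair.eq_zero_of_pair hrel
    exact hd0 h2
  refine ⟨main, ?_⟩
  -- irreducibility
  set a : F := algebraMap B F s with ha
  let Fbar := AlgebraicClosure F
  obtain ⟨α, hα⟩ := IsAlgClosed.exists_pow_nat_eq (algebraMap F Fbar a) h0l
  haveI : ExpChar Fbar p := expChar_of_injective_algebraMap (algebraMap F Fbar).injective p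
  have hsep : (minpoly F α).natSepDegree = 1 := by
    rw [minpoly.natSepDegree_eq_one_iff_pow_mem p]
    exact ⟨e, ⟨a, by rw [← hα, hl]⟩⟩
  obtain ⟨m, y, hmin⟩ := (minpoly.natSepDegree_eq_one_iff_eq_X_pow_sub_C p).mp hsep
  have hint : IsIntegral F α := by
    refine IsAlgebraic.isIntegral ⟨X ^ l - Polynomial.C a, ?_, ?_⟩
    · intro h
      have := congrArg natDegree h
      rw [natDegree_X_pow_sub_C, natDegree_zero] at this
      omega
    · simp [hα]
  have hαy : α ^ p ^ m = algebraMap F Fbar y := by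
    have := minpoly.aeval F α
    rw [hmin] at this
    simpa [sub_eq_zero] using this
  have hXlC : (X ^ l - Polynomial.C a : F[X]) ≠ 0 := by
    intro h
    have := congrArg natDegree h
    rw [natDegree_X_pow_sub_C, natDegree_zero] at this
    omega
  have hdvd : minpoly F α ∣ X ^ l - Polynomial.C a :=
    minpoly.dvd F α (by simp [hα])
  have hdeg : p ^ m ≤ l := by
    have h1 := Polynomial.natDegree_le_of_dvd hdvd hXlC
    rw [hmin, natDegree_X_pow_sub_C, natDegree_X_pow_sub_C] at h1
    exact h1
  have hem : m ≤ e := by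
    rw [hl] at hdeg
    exact (Nat.pow_le_pow_iff_right hp1).mp hdeg
  have hme : e ≤ m := by
    by_contra hcon
    push_neg at hcon
    have hmap : algebraMap F Fbar a = algebraMap F Fbar (y ^ p ^ (e - m)) := by
      rw [← hα, hl, map_pow, ← hαy, ← pow_mul, ← pow_add]
      congr 2
      omega
    have ha' : a = y ^ p ^ (e - m) := (algebraMap F Fbar).injective hmap
    refine main ⟨y ^ p ^ (e - m - 1), ?_⟩
    rw [ha', ← pow_mul, ← pow_succ]
    congr 2
    omega
  have hem' : m = e := le_antisymm hem hme
  have hya : y = a := by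
    apply (algebraMap F Fbar).injective
    rw [← hαy, hem', ← hl, hα]
  have : (X ^ l - Polynomial.C a : F[X]) = minpoly F α := by
    rw [hmin, hem', hya, hl]
  rw [this]
  exact minpoly.irreducible hint
end

section
/- In the localized polynomial algebra ℂ[y, z, u][z^{-1}], the element z^4 − f(u)z^2 + 1 is irreducible whenever f ∈ ℂ[u] is a polynomial of odd degree l > 0. -/
section KeyIrreducible
open Polynomial

lemma stmt18_key_no_root (f : Polynomial ℂ) (hpos : 0 < f.natDegree) (r : Polynomial ℂ)
    (hr : r ^ 4 - f * r ^ 2 + 1 = 0) : False := by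
  have hunit : IsUnit r := IsUnit.of_mul_eq_one (a := r) (f * r - r^3) (by linear_combination -hr)
  obtain ⟨s, hs, hsr⟩ := Polynomial.isUnit_iff.mp hunit
  subst hsr
  have hs0 : s ≠ 0 := hs.ne_zero
  have heq : f * C (s ^ 2) = C (s ^ 4 + 1) := by
    push_cast [map_add, map_pow, map_one]
    linear_combination -hr
  have hf0 : f ≠ 0 := fun h => by simp [h] at hpos
  have := congrArg Polynomial.natDegree heq
  rw [Polynomial.natDegree_mul hf0 (by simp [pow_ne_zero, hs0]), Polynomial.natDegree_C,
    Polynomial.natDegree_C] at this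
  omega

lemma stmt18_key_lin (f : Polynomial ℂ) (hpos : 0 < f.natDegree) (a : Polynomial (Polynomial ℂ))
    (ha : a.Monic) (h1 : a.natDegree = 1)
    (hdvd : a ∣ (X ^ 4 - C f * X ^ 2 + 1 : Polynomial (Polynomial ℂ))) : False := by
  obtain ⟨b, hb⟩ := hdvd
  have hax := ha.eq_X_add_C h1
  have h0 : (X ^ 4 - C f * X ^ 2 + 1 : Polynomial (Polynomial ℂ)).eval (-(a.coeff 0)) = 0 := by
    rw [hb, hax]
    simp
  simp only [eval_add, eval_sub, eval_mul, eval_pow, eval_X, eval_C, eval_one] at h0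
  exact stmt18_key_no_root f hpos (-(a.coeff 0)) h0

lemma stmt18_key_quad (f : Polynomial ℂ) (hodd : Odd f.natDegree) (hpos : 0 < f.natDegree)
    (a b : Polynomial (Polynomial ℂ)) (ha : a.Monic) (hb : b.Monic)
    (h2a : a.natDegree = 2) (h2b : b.natDegree = 2)
    (hab : a * b = (X ^ 4 - C f * X ^ 2 + 1 : Polynomial (Polynomial ℂ))) : False := by
  have ha2 : a.coeff 2 = 1 := by have := ha.coeff_natDegree; rwa [h2a] at this
  have hb2 : b.coeff 2 = 1 := by have := hb.coeff_natDegree; rwa [h2b] at this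
  have ha3 : a.coeff 3 = 0 := coeff_eq_zero_of_natDegree_lt (by omega)
  have hb3 : b.coeff 3 = 0 := coeff_eq_zero_of_natDegree_lt (by omega)
  have e0 := congrArg (fun p => Polynomial.coeff p 0) hab
  have e1 := congrArg (fun p => Polynomial.coeff p 1) hab
  have e2 := congrArg (fun p => Polynomial.coeff p 2) hab
  have e3 := congrArg (fun p => Polynomial.coeff p 3) hab
  simp only [coeff_mul, Finset.Nat.sum_antidiagonal_eq_sum_range_succ_mk,
    Finset.sum_range_succ, Finset.sum_range_zero, coeff_add, coeff_sub, coeff_X_pow,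
    coeff_one, coeff_C_mul, ha2, hb2, ha3, hb3] at e0 e1 e2 e3
  norm_num at e0 e1 e2 e3
  set a0 := a.coeff 0
  set a1 := a.coeff 1
  set b0 := b.coeff 0
  set b1 := b.coeff 1
  have hb1 : b1 = -a1 := by linear_combination e3
  rw [hb1] at e1 e2
  have hsplit : a1 * (b0 - a0) = 0 := by linear_combination e1
  rcases mul_eq_zero.mp hsplit with h | h
  · rw [h] at e2
    have hf : f = -a0 - b0 := by linear_combination e2
    have hu0 : IsUnit a0 := IsUnit.of_mul_eq_one _ e0
    have hu1 : IsUnit b0 := IsUnit.of_mul_eq_one _ (by rw [mul_comm]; exact e0)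
    have : f.natDegree ≤ 0 := by
      rw [hf]
      refine le_trans (natDegree_sub_le _ _) ?_
      simp [natDegree_neg, natDegree_eq_zero_of_isUnit hu0, natDegree_eq_zero_of_isUnit hu1]
    omega
  · have hb0 : b0 = a0 := by linear_combination h
    rw [hb0] at e0 e2
    have hu0 : IsUnit a0 := IsUnit.of_mul_eq_one _ e0
    have ha00 : a0.natDegree = 0 := natDegree_eq_zero_of_isUnit hu0
    have hf : f = a1 ^ 2 - (a0 + a0) := by linear_combination e2
    have hsum : (a0 + a0).natDegree = 0 := by
      have := natDegree_add_le a0 a0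
      omega
    rcases Nat.eq_zero_or_pos a1.natDegree with h1 | h1
    · have : f.natDegree ≤ 0 := by
        rw [hf]
        refine le_trans (natDegree_sub_le _ _) ?_
        simp [natDegree_pow, h1, hsum]
      omega
    · have hlt : (-(a0 + a0)).natDegree < (a1 ^ 2).natDegree := by
        rw [natDegree_neg, natDegree_pow, hsum]
        omega
      have : f.natDegree = 2 * a1.natDegree := by
        rw [hf, sub_eq_add_neg, natDegree_add_eq_left_of_natDegree_lt hlt, natDegree_pow]
      rw [this] at hodd
      exact (Nat.not_odd_iff_even.mpr ⟨a1.natDegree, by ring⟩) hodd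

lemma stmt18_key (f : Polynomial ℂ) (hodd : Odd f.natDegree) (hpos : 0 < f.natDegree) :
    Irreducible (X ^ 4 - C f * X ^ 2 + 1 : Polynomial (Polynomial ℂ)) := by
  set P : Polynomial (Polynomial ℂ) := X ^ 4 - C f * X ^ 2 + 1 with hP
  have hmonic : P.Monic := by
    have h4 : P = X ^ 4 + (1 - C f * X ^ 2) := by ring
    rw [h4]
    apply monic_X_pow_add
    refine lt_of_le_of_lt (degree_sub_le _ _) ?_
    rw [max_lt_iff]
    constructor
    · exact lt_of_le_of_lt degree_one_le (by norm_num)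
    · refine lt_of_le_of_lt (degree_mul_le _ _) ?_
      refine lt_of_le_of_lt (add_le_add degree_C_le (degree_X_pow 2).le) ?_
      norm_num
  have hdeg : P.natDegree = 4 := by
    rw [hP]
    compute_degree!
  constructor
  · intro h
    have := natDegree_eq_zero_of_isUnit h
    omega
  · rintro a b hab
    by_contra hcon
    push_neg at hcon
    obtain ⟨hua, hub⟩ := hcon
    have ha0 : a ≠ 0 := by rintro rfl; exact hmonic.ne_zero (by simpa using hab)
    have hb0 : b ≠ 0 := by rintro rfl; exact hmonic.ne_zero (by simpa using hab)
    have hl : a.leadingCoeff * b.leadingCoeff = 1 := by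
      rw [← leadingCoeff_mul, ← hab, hmonic.leadingCoeff]
    set a' := C b.leadingCoeff * a with ha'
    set b' := C a.leadingCoeff * b with hb'
    have hab' : a' * b' = P := by
      rw [ha', hb']
      have : C b.leadingCoeff * a * (C a.leadingCoeff * b) =
          C (a.leadingCoeff * b.leadingCoeff) * (a * b) := by
        rw [map_mul]; ring
      rw [this, hl, map_one, one_mul, hab]
    have hma : a'.Monic := by
      have : a'.leadingCoeff = 1 := by
        rw [ha', leadingCoeff_mul, leadingCoeff_C, mul_comm, hl]
      exact this
    have hmb : b'.Monic := by
      have : b'.leadingCoeff = 1 := by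
        rw [hb', leadingCoeff_mul, leadingCoeff_C, hl]
      exact this
    have hua' : ¬ IsUnit a' := fun h => hua (isUnit_of_mul_isUnit_right h)
    have hub' : ¬ IsUnit b' := fun h => hub (isUnit_of_mul_isUnit_right h)
    have hd : a'.natDegree + b'.natDegree = 4 := by
      rw [← natDegree_mul hma.ne_zero hmb.ne_zero, hab', hdeg]
    have hda : 0 < a'.natDegree := by
      rcases Nat.eq_zero_or_pos a'.natDegree with h | h
      · exact absurd (hma.natDegree_eq_zero.mp h ▸ isUnit_one) hua'
      · exact h
    have hdb : 0 < b'.natDegree := by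
      rcases Nat.eq_zero_or_pos b'.natDegree with h | h
      · exact absurd (hmb.natDegree_eq_zero.mp h ▸ isUnit_one) hub'
      · exact h
    have hle : a'.natDegree ≤ 3 := by omega
    interval_cases h : a'.natDegree
    · exact stmt18_key_lin f hpos a' hma h ⟨b', hab'.symm⟩
    · exact stmt18_key_quad f hodd hpos a' b' hma hmb h (by omega) (hab'.trans hP)
    · exact stmt18_key_lin f hpos b' hmb (by omega) ⟨a', by rw [mul_comm b' a', hab']⟩

end KeyIrreducible

open MvPolynomial

section Transfer

/-- `MvPolynomial (Fin 1) ℂ ≃ₐ[ℂ] ℂ[X]`. -/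
noncomputable def stmt18ψ : MvPolynomial (Fin 1) ℂ ≃ₐ[ℂ] Polynomial ℂ :=
  (MvPolynomial.renameEquiv ℂ (Equiv.equivPUnit.{1,1} (Fin 1))).trans (MvPolynomial.pUnitAlgEquiv ℂ)

/-- `MvPolynomial (Fin 2) ℂ ≃ₐ[ℂ] (ℂ[X])[X]`, sending `X 0` to the outer variable. -/
noncomputable def stmt18E : MvPolynomial (Fin 2) ℂ ≃ₐ[ℂ] Polynomial (Polynomial ℂ) :=
  (MvPolynomial.finSuccEquiv ℂ 1).trans (Polynomial.mapAlgEquiv stmt18ψ)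

lemma stmt18E_X0 : stmt18E (X 0) = Polynomial.X := by
  simp [stmt18E, finSuccEquiv_X_zero, Polynomial.mapAlgEquiv]

lemma stmt18ψ_X0 : stmt18ψ (X 0) = Polynomial.X := by
  simp [stmt18ψ]

lemma stmt18E_X1 : stmt18E (X 1) = Polynomial.C Polynomial.X := by
  have h1 : (X 1 : MvPolynomial (Fin 2) ℂ) = X (Fin.succ 0) := rfl
  simp [stmt18E, h1, finSuccEquiv_X_succ, Polynomial.mapAlgEquiv, stmt18ψ_X0]

lemma stmt18_prime2 (f : Polynomial ℂ) (hodd : Odd f.natDegree) (hpos : 0 < f.natDegree) :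
    Prime ((X 0) ^ 4 - Polynomial.aeval (X 1 : MvPolynomial (Fin 2) ℂ) f * (X 0) ^ 2 + 1) := by
  have h0 : Prime (Polynomial.X ^ 4 - Polynomial.C f * Polynomial.X ^ 2 + 1 :
      Polynomial (Polynomial ℂ)) :=
    UniqueFactorizationMonoid.irreducible_iff_prime.mp (stmt18_key f hodd hpos)
  refine (MulEquiv.prime_iff stmt18E.toMulEquiv).mp ?_
  have haev : stmt18E (Polynomial.aeval (X 1 : MvPolynomial (Fin 2) ℂ) f) = Polynomial.C f := by
    rw [← Polynomial.aeval_algHom_apply stmt18E (X 1) f]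
    rw [stmt18E_X1]
    have : (Polynomial.C Polynomial.X : Polynomial (Polynomial ℂ)) =
        (Algebra.ofId (Polynomial ℂ) (Polynomial (Polynomial ℂ))).restrictScalars ℂ
          Polynomial.X := rfl
    rw [this, Polynomial.aeval_algHom_apply, Polynomial.aeval_X_left_apply]
    rfl
  have : stmt18E ((X 0) ^ 4 - Polynomial.aeval (X 1 : MvPolynomial (Fin 2) ℂ) f * (X 0) ^ 2 + 1)
      = Polynomial.X ^ 4 - Polynomial.C f * Polynomial.X ^ 2 + 1 := by
    rw [map_add, map_sub, map_pow, map_mul, map_pow, map_one, stmt18E_X0, haev]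
  rw [show stmt18E.toMulEquiv ((X 0) ^ 4 -
      Polynomial.aeval (X 1 : MvPolynomial (Fin 2) ℂ) f * (X 0) ^ 2 + 1) =
      stmt18E ((X 0) ^ 4 - Polynomial.aeval (X 1 : MvPolynomial (Fin 2) ℂ) f * (X 0) ^ 2 + 1)
      from rfl, this]
  exact h0

lemma stmt18_prime3 (f : Polynomial ℂ) (hodd : Odd f.natDegree) (hpos : 0 < f.natDegree) :
    Prime ((X 1) ^ 4 - Polynomial.aeval (X 2 : MvPolynomial (Fin 3) ℂ) f * (X 1) ^ 2 + 1) := by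
  have hq := stmt18_prime2 f hodd hpos
  have hCq : Prime (Polynomial.C ((X 0) ^ 4 -
      Polynomial.aeval (X 1 : MvPolynomial (Fin 2) ℂ) f * (X 0) ^ 2 + 1) :
      Polynomial (MvPolynomial (Fin 2) ℂ)) := Polynomial.prime_C_iff.mpr hq
  refine (MulEquiv.prime_iff (MvPolynomial.finSuccEquiv ℂ 2).toMulEquiv).mp ?_
  have h1 : (X 1 : MvPolynomial (Fin 3) ℂ) = X (Fin.succ 0) := rfl
  have h2 : (X 2 : MvPolynomial (Fin 3) ℂ) = X (Fin.succ 1) := rfl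
  have haev : (MvPolynomial.finSuccEquiv ℂ 2) (Polynomial.aeval (X 2 : MvPolynomial (Fin 3) ℂ) f)
      = Polynomial.C (Polynomial.aeval (X 1 : MvPolynomial (Fin 2) ℂ) f) := by
    rw [← Polynomial.aeval_algHom_apply (MvPolynomial.finSuccEquiv ℂ 2) (X 2) f]
    rw [h2, finSuccEquiv_X_succ]
    have : (Polynomial.C (X 1 : MvPolynomial (Fin 2) ℂ)) =
        (Algebra.ofId (MvPolynomial (Fin 2) ℂ)
          (Polynomial (MvPolynomial (Fin 2) ℂ))).restrictScalars ℂ (X 1) := rfl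
    rw [this, Polynomial.aeval_algHom_apply]
    rfl
  have hmap : (MvPolynomial.finSuccEquiv ℂ 2)
      ((X 1) ^ 4 - Polynomial.aeval (X 2 : MvPolynomial (Fin 3) ℂ) f * (X 1) ^ 2 + 1)
      = Polynomial.C ((X 0) ^ 4 -
        Polynomial.aeval (X 1 : MvPolynomial (Fin 2) ℂ) f * (X 0) ^ 2 + 1) := by
    rw [map_add, map_sub, map_pow, map_mul, map_pow, map_one, haev, h1, finSuccEquiv_X_succ]
    push_cast [map_add, map_sub, map_mul, map_pow, map_one]
    ring
  rw [show (MvPolynomial.finSuccEquiv ℂ 2).toMulEquiv ((X 1) ^ 4 -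
      Polynomial.aeval (X 2 : MvPolynomial (Fin 3) ℂ) f * (X 1) ^ 2 + 1) =
      (MvPolynomial.finSuccEquiv ℂ 2) ((X 1) ^ 4 -
      Polynomial.aeval (X 2 : MvPolynomial (Fin 3) ℂ) f * (X 1) ^ 2 + 1) from rfl, hmap]
  exact hCq

end Transfer


open MvPolynomial





/-- in the localized polynomial algebra `ℂ[y, z, u][z⁻¹]` (with
`y = X 0`, `z = X 1`, `u = X 2`), the element `z^4 − f(u)·z^2 + 1` is irreducible for
every univariate polynomial `f` of odd positive degree. -/
theorem stmt18 (f : Polynomial ℂ) (hodd : Odd f.natDegree) (hpos : 0 < f.natDegree) :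
    Irreducible (algebraMap (MvPolynomial (Fin 3) ℂ)
      (Localization.Away (X 1 : MvPolynomial (Fin 3) ℂ))
      ((X 1) ^ 4 - Polynomial.aeval (X 2 : MvPolynomial (Fin 3) ℂ) f * (X 1) ^ 2 + 1)) := by
  set A := MvPolynomial (Fin 3) ℂ
  set S := Localization.Away (X 1 : A)
  set p : A := (X 1) ^ 4 - Polynomial.aeval (X 2 : A) f * (X 1) ^ 2 + 1 with hp
  have hprime : Prime p := stmt18_prime3 f hodd hpos
  have hXne : (X 1 : A) ≠ 0 := MvPolynomial.X_ne_zero 1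
  have hinj : Function.Injective (algebraMap A S) :=
    IsLocalization.injective S (powers_le_nonZeroDivisors_of_noZeroDivisors hXne)
  have hne : algebraMap A S p ≠ 0 := by
    intro h
    exact hprime.ne_zero (hinj (by rw [h, map_zero]))
  -- `X 1` does not divide `p`
  have hnd : ¬ (X 1 : A) ∣ p := by
    intro hdvd
    have := MvPolynomial.aeval (fun _ => (0 : ℂ)) |>.toRingHom.map_dvd hdvd
    simp only [AlgHom.toRingHom_eq_coe, RingHom.coe_coe] at this
    rw [hp] at this
    change (MvPolynomial.aeval (fun _ => (0 : ℂ))) (X 1 : A) ∣ (MvPolynomial.aeval (fun _ => (0 : ℂ))) ((X 1) ^ 4 - Polynomial.aeval (X 2 : A) f * (X 1) ^ 2 + 1) at this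
    simp only [map_add, map_sub, map_mul, map_pow, map_one, MvPolynomial.aeval_X] at this
    norm_num at this
  have hX0p : Prime (X 0 : MvPolynomial (Fin 2) ℂ) := by
    refine (MulEquiv.prime_iff (MvPolynomial.finSuccEquiv ℂ 1).toMulEquiv).mp ?_
    show Prime ((MvPolynomial.finSuccEquiv ℂ 1) (X 0))
    rw [finSuccEquiv_X_zero]
    exact Polynomial.prime_X
  have hX1p : Prime (X 1 : A) := by
    refine (MulEquiv.prime_iff (MvPolynomial.finSuccEquiv ℂ 2).toMulEquiv).mp ?_
    show Prime ((MvPolynomial.finSuccEquiv ℂ 2) (X 1))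
    rw [show (X 1 : A) = X (Fin.succ 0) from rfl, finSuccEquiv_X_succ]
    exact Polynomial.prime_C_iff.mpr hX0p
  have hdisj : Disjoint (↑(Submonoid.powers (X 1 : A)) : Set A) ↑(Ideal.span {p}) := by
    rw [Set.disjoint_left]
    rintro x ⟨n, rfl⟩ hx
    have hdvd : p ∣ (X 1 : A) ^ n := Ideal.mem_span_singleton.mp hx
    have hpx : p ∣ (X 1 : A) := hprime.dvd_of_dvd_pow hdvd
    have hassoc : Associated p (X 1 : A) :=
      hprime.irreducible.associated_of_dvd hX1p.irreducible hpx
    exact hnd (hassoc.symm.dvd)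
  have hspan : (Ideal.span {p}).IsPrime := (Ideal.span_singleton_prime hprime.ne_zero).mpr hprime
  have hSprime : (Ideal.span {algebraMap A S p}).IsPrime := by
    have := IsLocalization.isPrime_of_isPrime_disjoint (Submonoid.powers (X 1 : A)) S
      (Ideal.span {p}) hspan hdisj
    rwa [Ideal.map_span, Set.image_singleton] at this
  haveI : IsDomain S := IsLocalization.isDomain_of_le_nonZeroDivisors S
    (powers_le_nonZeroDivisors_of_noZeroDivisors hXne)
  have : Prime (algebraMap A S p) := (Ideal.span_singleton_prime hne).mp hSprime
  exact this.irreducible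
end
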